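/- arXiv:2011.07789 — 4 statements merged into one kernel-verified Lean document; each statement's English description precedes it below -/
import Mathlib

section
/- Let X be a real Banach space, κ ∈ (0,1), z₀ ∈ X, u : Q → X continuous, and Θⱼ : X → X maps for j = 1,…,m. Suppose z ∈ IC(Q;X) is continuously differentiable on [0,τ₁] and on each interval (τⱼ,τⱼ₊₁] (j = 1,…,m), with its piecewise derivative ż bounded and integrable on (0,T); that z(0) = z₀ and z(τⱼ⁺) − z(τⱼ⁻) = Θⱼ(z(τⱼ⁻)) for each j = 1,…,m; and that for every t ∈ Q with t ∉ {τ₁,…,τ_m}, (1/Γ(1−κ)) ∫₀^t (t−s)^{−κ} ż(s) ds = u(t). Then for each j = 0,1,…,m and every t ∈ (τⱼ, τⱼ₊₁], z(t) = z₀ + Σ_{i=1}^{j} Θᵢ(z(τᵢ⁻)) + (1/Γ(κ)) ∫₀^t (t−s)^{κ−1} u(s) ds. -/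
/-!
The piecewise fundamental theorem of calculus, with the jumps entering through the right limits
at the impulse times, gives `∫₀ᵗ ż = z t - z₀ - ∑ᵢ Θᵢ (z τᵢ)` for `t ∈ (τⱼ, τⱼ₊₁]`.
The Caputo equation holds off finitely many points, hence almost everywhere, so it may be
substituted into the Riemann–Liouville integral `∫₀ᵗ (t - s)^(κ-1) u s ds`. Exchanging the order
of integration over the triangle `0 < r < s < t` leaves the kernel
`∫ᵣᵗ (t - s)^(κ-1) (s - r)^(-κ) ds = B(1 - κ, κ) = Γ(1 - κ) Γ(κ)`, which does not depend on `r`.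
-/

open MeasureTheory intervalIntegral Set Filter

/-- `IC T m τ x` : `x` belongs to the space `IC(Q;X)` of piecewise continuous functions on
`Q = [0,T]` with possible jumps at the impulse times `τ 1, …, τ m`: it is continuous (within
`Q`) at every non-impulse point, has one-sided limits at each impulse time `τ j`, and is
left-continuous there (`x (τ j) = x (τ j⁻)`). -/
def IC {X : Type*} [NormedAddCommGroup X] (T : ℝ) (m : ℕ) (τ : ℕ → ℝ) (x : ℝ → X) : Prop :=
  (∀ t ∈ Set.Icc (0:ℝ) T, (∀ j, 1 ≤ j → j ≤ m → t ≠ τ j) →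
      ContinuousWithinAt x (Set.Icc 0 T) t) ∧
  (∀ j, 1 ≤ j → j ≤ m →
      (Filter.Tendsto x (nhdsWithin (τ j) (Set.Iio (τ j))) (nhds (x (τ j))) ∧
       ∃ L, Filter.Tendsto x (nhdsWithin (τ j) (Set.Ioi (τ j))) (nhds L)))

open Topology

theorem integral_sub_rpow_mul_sub_rpow {a b r t : ℝ} (ha : 0 < a) (hb : 0 < b) (hrt : r < t) :
    ∫ s in r..t, (s - r) ^ (a - 1) * (t - s) ^ (b - 1)
      = (t - r) ^ (a + b - 1) * ProbabilityTheory.beta a b := by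
  have hc : 0 < t - r := sub_pos.2 hrt
  have hshift := integral_comp_sub_right (fun x => x ^ (a - 1) * (t - r - x) ^ (b - 1)) r
    (a := r) (b := t)
  simp only [sub_self, sub_sub_sub_cancel_right] at hshift
  rw [hshift]
  apply Complex.ofReal_injective
  rw [← integral_ofReal, integral_congr (g := fun x : ℝ => (x : ℂ) ^ ((a : ℂ) - 1) *
      ((((t - r : ℝ)) : ℂ) - x) ^ ((b : ℂ) - 1)), Complex.betaIntegral_scaled _ _ hc,
    Complex.betaIntegral_eq_Gamma_mul_div _ _ (by simpa) (by simpa)]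
  · simp only [ProbabilityTheory.beta, Complex.ofReal_mul, Complex.ofReal_div,
      ← Complex.Gamma_ofReal, Complex.ofReal_cpow hc.le]
    push_cast
    ring_nf
  · intro x hx
    rw [uIcc_of_le hc.le] at hx
    simp only [Complex.ofReal_mul]
    rw [Complex.ofReal_cpow hx.1, Complex.ofReal_cpow (sub_nonneg.2 hx.2)]
    push_cast
    ring_nf

theorem integral_kernel_eq_Gamma_mul_Gamma {κ r t : ℝ} (hκ : κ ∈ Ioo 0 1) (hrt : r < t) :
    ∫ s in r..t, (t - s) ^ (κ - 1) * (s - r) ^ (-κ) = Real.Gamma (1 - κ) * Real.Gamma κ := by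
  have h := integral_sub_rpow_mul_sub_rpow (sub_pos.2 hκ.2) hκ.1 hrt
  rw [show 1 - κ - 1 = -κ by ring, show 1 - κ + κ - 1 = 0 by ring, Real.rpow_zero, one_mul,
    ProbabilityTheory.beta, sub_add_cancel, Real.Gamma_one, div_one] at h
  simpa only [mul_comm] using h

theorem Ioc_subset_Icc_of_lt_succ {α : Type*} [Preorder α] {τ : ℕ → α} {m j : ℕ}
    (hτ : ∀ k ≤ m, τ k < τ (k+1)) (hj : j ≤ m) : Ioc (τ j) (τ (j+1)) ⊆ Icc (τ 0) (τ (m+1)) := by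
  have hmono : MonotoneOn τ (Iic (m+1)) :=
    (strictMonoOn_Iic_of_lt_succ fun k hk => hτ k (Nat.lt_succ_iff.1 hk)).monotoneOn
  exact Ioc_subset_Icc_self.trans
    (Icc_subset_Icc (hmono (by simp) (by simp; omega) (Nat.zero_le j))
      (hmono (by simp; omega) (by simp) (by omega)))

section

variable {E : Type*} [NormedAddCommGroup E] [NormedSpace ℝ E] [CompleteSpace E]

theorem integrable_and_integral_indicator_kernel_smul {κ r t : ℝ} (hκ : κ ∈ Ioo 0 1)
    (hr : r ∈ Ioo 0 t) (c : E) :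
    Integrable (fun s => (Ici r).indicator (fun s => ((t - s) ^ (κ - 1) * (s - r) ^ (-κ)) • c) s)
      (volume.restrict (Ioo 0 t)) ∧
    ∫ s in Ioo 0 t, (Ici r).indicator (fun s => ((t - s) ^ (κ - 1) * (s - r) ^ (-κ)) • c) s
      = (Real.Gamma (1 - κ) * Real.Gamma κ) • c := by
  have hval := integral_kernel_eq_Gamma_mul_Gamma hκ hr.2
  -- a function that is not integrable has integral `0`, and this one has a positive integral
  have hint := (intervalIntegrable_iff_integrableOn_Icc_of_le hr.2.le).1
    (intervalIntegrable_of_integral_ne_zero (hval ▸ (mul_pos (Real.Gamma_pos_of_pos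
      (sub_pos.2 hκ.2)) (Real.Gamma_pos_of_pos hκ.1)).ne'))
  have hset : Ici r ∩ Ioo 0 t = Ico r t := by
    ext s; simp only [mem_inter_iff, mem_Ici, mem_Ioo, mem_Ico]
    exact ⟨fun h => ⟨h.1, h.2.2⟩, fun h => ⟨h.1, hr.1.trans_le h.1, h.2⟩⟩
  rw [integrable_indicator_iff measurableSet_Ici,
    MeasureTheory.integral_indicator measurableSet_Ici, IntegrableOn,
    Measure.restrict_restrict measurableSet_Ici, hset, _root_.integral_smul_const,
    integral_Ico_eq_integral_Ioc, ← integral_of_le hr.2.le, hval]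
  exact ⟨(hint.mono_set Ico_subset_Icc_self).smul_const c, rfl⟩

theorem integrable_indicator_kernel_smul_prod {κ t : ℝ} (hκ : κ ∈ Ioo 0 1) {f : ℝ → E}
    (hf : Integrable f (volume.restrict (Ioo 0 t))) :
    Integrable (fun p : ℝ × ℝ =>
        (Ici p.2).indicator (fun s => ((t - s) ^ (κ - 1) * (s - p.2) ^ (-κ)) • f p.2) p.1)
      ((volume.restrict (Ioo 0 t)).prod (volume.restrict (Ioo 0 t))) := by
  set k : ℝ → ℝ → ℝ := fun s r => (t - s) ^ (κ - 1) * (s - r) ^ (-κ)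
  have hmeas : AEStronglyMeasurable
      (fun p : ℝ × ℝ => (Ici p.2).indicator (fun s => k s p.2 • f p.2) p.1)
      ((volume.restrict (Ioo 0 t)).prod (volume.restrict (Ioo 0 t))) := by
    have hG : (fun p : ℝ × ℝ => (Ici p.2).indicator (fun s => k s p.2 • f p.2) p.1)
        = {p : ℝ × ℝ | p.2 ≤ p.1}.indicator (fun p => k p.1 p.2 • f p.2) := by
      ext p; simp only [indicator_apply, mem_Ici, mem_ofPred_eq]
    have hk : Measurable fun p : ℝ × ℝ => k p.1 p.2 := by fun_prop
    exact hG ▸ (hk.aestronglyMeasurable.smul hf.1.comp_snd).indicator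
      (measurableSet_le measurable_snd measurable_fst)
  have hnorm : ∀ r ∈ Ioo 0 t, ∫ s in Ioo 0 t, ‖(Ici r).indicator (fun s => k s r • f r) s‖
      = (Real.Gamma (1 - κ) * Real.Gamma κ) * ‖f r‖ := by
    intro r hr
    rw [← smul_eq_mul, ← (integrable_and_integral_indicator_kernel_smul hκ hr ‖f r‖).2]
    refine integral_congr_ae (ae_restrict_of_forall_mem measurableSet_Ioo fun s hs => ?_)
    by_cases hsr : s ∈ Ici r
    · simp only [indicator_of_mem hsr, norm_smul, Real.norm_eq_abs, smul_eq_mul]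
      rw [abs_of_nonneg (mul_nonneg (Real.rpow_nonneg (sub_nonneg.2 hs.2.le) _)
        (Real.rpow_nonneg (sub_nonneg.2 hsr) _))]
    · simp only [indicator_of_notMem hsr, norm_zero]
  exact (integrable_prod_iff' hmeas).2
    ⟨ae_restrict_of_forall_mem measurableSet_Ioo fun r hr =>
        (integrable_and_integral_indicator_kernel_smul hκ hr (f r)).1,
      (hf.norm.const_mul _).congr
        (ae_restrict_of_forall_mem measurableSet_Ioo fun r hr => (hnorm r hr).symm)⟩

theorem integral_rpow_smul_integral_rpow_smul {κ t : ℝ} (hκ : κ ∈ Ioo 0 1) (ht : 0 ≤ t)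
    {f : ℝ → E} (hf : IntervalIntegrable f volume 0 t) :
    ∫ s in (0:ℝ)..t, (t - s) ^ (κ - 1) • ∫ r in (0:ℝ)..s, (s - r) ^ (-κ) • f r
      = (Real.Gamma (1 - κ) * Real.Gamma κ) • ∫ r in (0:ℝ)..t, f r := by
  set μ := volume.restrict (Ioo (0:ℝ) t)
  set k : ℝ → ℝ → ℝ := fun s r => (t - s) ^ (κ - 1) * (s - r) ^ (-κ)
  set G : ℝ → ℝ → E := fun s r => (Ici r).indicator (fun s => k s r • f r) s
  have hf' : Integrable f μ := (intervalIntegrable_iff_integrableOn_Ioo_of_le ht).1 hf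
  have hGs : ∀ s ∈ Ioo 0 t,
      ∫ r, G s r ∂μ = (t - s) ^ (κ - 1) • ∫ r in (0:ℝ)..s, (s - r) ^ (-κ) • f r := by
    intro s hs
    have hslice : (fun r => G s r) = (Iic s).indicator (fun r => k s r • f r) := by
      ext r; simp only [G, indicator_apply, mem_Ici, mem_Iic]
    have hset : Iic s ∩ Ioo 0 t = Ioc 0 s := by
      ext r; simp only [mem_inter_iff, mem_Iic, mem_Ioo, mem_Ioc]
      exact ⟨fun h => ⟨h.2.1, h.1⟩, fun h => ⟨h.2, h.1, h.2.trans_lt hs.2⟩⟩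
    rw [hslice, MeasureTheory.integral_indicator measurableSet_Iic,
      Measure.restrict_restrict measurableSet_Iic, hset, integral_of_le hs.1.le,
      ← MeasureTheory.integral_smul]
    simp only [k, smul_smul]
  calc ∫ s in (0:ℝ)..t, (t - s) ^ (κ - 1) • ∫ r in (0:ℝ)..s, (s - r) ^ (-κ) • f r
      = ∫ s, ∫ r, G s r ∂μ ∂μ := by
        rw [integral_of_le ht, integral_Ioc_eq_integral_Ioo]
        exact setIntegral_congr_fun measurableSet_Ioo fun s hs => (hGs s hs).symm
    _ = ∫ r, ∫ s, G s r ∂μ ∂μ :=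
        integral_integral_swap (integrable_indicator_kernel_smul_prod hκ hf')
    _ = ∫ r, (Real.Gamma (1 - κ) * Real.Gamma κ) • f r ∂μ :=
        setIntegral_congr_fun measurableSet_Ioo fun r hr =>
          (integrable_and_integral_indicator_kernel_smul hκ hr (f r)).2
    _ = (Real.Gamma (1 - κ) * Real.Gamma κ) • ∫ r in (0:ℝ)..t, f r := by
        rw [MeasureTheory.integral_smul, integral_of_le ht, integral_Ioc_eq_integral_Ioo]

theorem integral_eq_sub_of_hasDerivWithinAt_Icc {z zd : ℝ → E} {a b : ℝ} (hab : a ≤ b)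
    (hd : ∀ s ∈ Icc a b, HasDerivWithinAt z (zd s) (Icc a b) s)
    (hint : IntervalIntegrable zd volume a b) :
    ∫ s in a..b, zd s = z b - z a :=
  integral_eq_sub_of_hasDeriv_right_of_le hab (fun s hs => (hd s hs).continuousWithinAt)
    (fun s hs => ((hd s (Ioo_subset_Icc_self hs)).hasDerivAt
      (Icc_mem_nhds hs.1 hs.2)).hasDerivWithinAt) hint

theorem integral_eq_sub_of_hasDerivWithinAt_Ioc {z zd : ℝ → E} {a b : ℝ} (hab : a < b) {L : E}
    (hd : ∀ s ∈ Ioc a b, HasDerivWithinAt z (zd s) (Ioc a b) s)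
    (hL : Tendsto z (𝓝[>] a) (𝓝 L))
    (hint : IntervalIntegrable zd volume a b) :
    ∫ s in a..b, zd s = z b - L := by
  set f := Function.update z a L
  have hfz : EqOn f z (Ioc a b) := fun s hs => Function.update_of_ne hs.1.ne' _ _
  have hcont : ContinuousOn f (Icc a b) := by
    rw [continuousOn_update_iff, Icc_sdiff_left]
    exact ⟨fun s hs => (hd s hs).continuousWithinAt,
      fun _ => hL.mono_left (nhdsWithin_mono a Ioc_subset_Ioi_self)⟩
  have hderiv : ∀ x ∈ Ioo a b, HasDerivWithinAt f (zd x) (Ioi x) x := fun x hx =>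
    (((hd x (Ioo_subset_Ioc_self hx)).hasDerivAt (Ioc_mem_nhds hx.1 hx.2)).congr_of_eventuallyEq
      (hfz.eventuallyEq_of_mem (Ioc_mem_nhds hx.1 hx.2))).hasDerivWithinAt
  rw [integral_eq_sub_of_hasDeriv_right_of_le hab.le hcont hderiv hint, hfz ⟨hab, le_rfl⟩]
  simp [f]

theorem integral_eq_sub_sub_sum_jumps {z zd : ℝ → E} {m : ℕ} {τ : ℕ → ℝ} {J : ℕ → E}
    (hτ : ∀ j ≤ m, τ j < τ (j+1))
    (hz0 : ∀ t ∈ Icc (τ 0) (τ 1), HasDerivWithinAt z (zd t) (Icc (τ 0) (τ 1)) t)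
    (hzj : ∀ j, 1 ≤ j → j ≤ m → ∀ t ∈ Ioc (τ j) (τ (j+1)),
      HasDerivWithinAt z (zd t) (Ioc (τ j) (τ (j+1))) t)
    (hjump : ∀ j, 1 ≤ j → j ≤ m → Tendsto z (𝓝[>] (τ j)) (𝓝 (z (τ j) + J j)))
    (hint : IntervalIntegrable zd volume (τ 0) (τ (m+1))) :
    ∀ j ≤ m, ∀ t ∈ Ioc (τ j) (τ (j+1)),
      ∫ s in τ 0..t, zd s = z t - z (τ 0) - ∑ i ∈ Finset.Icc 1 j, J i := by
  have hmem {j : ℕ} (hj : j ≤ m) := Ioc_subset_Icc_of_lt_succ hτ hj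
  have h1 := hmem (Nat.zero_le m) (right_mem_Ioc.2 (hτ 0 (Nat.zero_le m)))
  have h0 : τ 0 ∈ Icc (τ 0) (τ (m+1)) := left_mem_Icc.2 (h1.1.trans h1.2)
  have hint' : ∀ a ∈ Icc (τ 0) (τ (m+1)), ∀ b ∈ Icc (τ 0) (τ (m+1)),
      IntervalIntegrable zd volume a b := fun a ha b hb =>
    hint.mono_set (uIcc_subset_uIcc (uIcc_of_le h0.2 ▸ ha) (uIcc_of_le h0.2 ▸ hb))
  intro j
  induction j with
  | zero =>
    intro _ t ht
    rw [Finset.Icc_eq_empty (by omega), Finset.sum_empty, sub_zero]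
    exact integral_eq_sub_of_hasDerivWithinAt_Icc ht.1.le
      (fun s hs => (hz0 s ⟨hs.1, hs.2.trans ht.2⟩).mono (Icc_subset_Icc_right ht.2))
      (hint' _ h0 _ (hmem (Nat.zero_le m) ht))
  | succ n ih =>
    intro hn t ht
    have hτn : τ (n+1) ∈ Ioc (τ n) (τ (n+1)) := ⟨hτ n (by omega), le_rfl⟩
    have hτn' := hmem (by omega) hτn
    have ht' := hmem hn ht
    have hpiece : ∫ s in τ (n+1)..t, zd s = z t - (z (τ (n+1)) + J (n+1)) :=
      integral_eq_sub_of_hasDerivWithinAt_Ioc ht.1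
        (fun s hs => (hzj (n+1) (by omega) hn s ⟨hs.1, hs.2.trans ht.2⟩).mono
          (Ioc_subset_Ioc_right ht.2))
        (hjump (n+1) (by omega) hn) (hint' _ hτn' _ ht')
    rw [← integral_add_adjacent_intervals (hint' _ h0 _ hτn') (hint' _ hτn' _ ht'),
      ih (by omega) _ hτn, hpiece, Finset.sum_Icc_succ_top (by omega)]
    abel

end

theorem statement_1_general
    {X : Type*} [NormedAddCommGroup X] [NormedSpace ℝ X] [CompleteSpace X]
    (T : ℝ) (m : ℕ) (τ : ℕ → ℝ)
    (hτ0 : τ 0 = 0) (hτT : τ (m+1) = T) (hτmono : ∀ j ≤ m, τ j < τ (j+1))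
    (κ : ℝ) (hκ : κ ∈ Set.Ioo (0:ℝ) 1)
    (z₀ : X) (u : ℝ → X)
    (Θ : ℕ → X → X)
    (z zd : ℝ → X)
    -- `z` is continuously differentiable on `[0, τ 1]` with derivative `zd`
    (hz0 : ∀ t ∈ Set.Icc (0:ℝ) (τ 1), HasDerivWithinAt z (zd t) (Set.Icc 0 (τ 1)) t)
    -- `z` is continuously differentiable on each `(τ j, τ (j+1)]` with derivative `zd`
    (hzj : ∀ j, 1 ≤ j → j ≤ m → ∀ t ∈ Set.Ioc (τ j) (τ (j+1)),
      HasDerivWithinAt z (zd t) (Set.Ioc (τ j) (τ (j+1))) t)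
    -- the piecewise derivative is bounded and integrable on `(0,T)`
    (hzdint : IntervalIntegrable zd MeasureTheory.volume 0 T)
    -- initial condition
    (hz0v : z 0 = z₀)
    -- impulsive jump conditions: `z (τ j ⁺) - z (τ j ⁻) = Θ j (z (τ j ⁻))`,
    -- where `z (τ j ⁻) = z (τ j)` since `z ∈ IC(Q;X)`
    (hjump : ∀ j, 1 ≤ j → j ≤ m →
      Filter.Tendsto z (nhdsWithin (τ j) (Set.Ioi (τ j))) (nhds (z (τ j) + Θ j (z (τ j)))))
    -- Caputo fractional differential equation off the impulse times
    (hCaputo : ∀ t ∈ Set.Icc (0:ℝ) T, (∀ j, 1 ≤ j → j ≤ m → t ≠ τ j) →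
      (1 / Real.Gamma (1 - κ)) • ∫ s in (0:ℝ)..t, ((t - s) ^ (-κ) : ℝ) • zd s = u t) :
    ∀ j ≤ m, ∀ t ∈ Set.Ioc (τ j) (τ (j+1)),
      z t = z₀ + (∑ i ∈ Finset.Icc 1 j, Θ i (z (τ i)))
        + (1 / Real.Gamma κ) • ∫ s in (0:ℝ)..t, ((t - s) ^ (κ - 1) : ℝ) • u s := by
  intro j hj t ht
  have htQ : t ∈ Icc 0 T := hτ0 ▸ hτT ▸ Ioc_subset_Icc_of_lt_succ hτmono hj ht
  have hzd : IntervalIntegrable zd volume 0 t :=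
    hzdint.mono_set (uIcc_subset_uIcc left_mem_uIcc (uIcc_of_le (htQ.1.trans htQ.2) ▸ htQ))
  have hFTC : ∫ s in (0:ℝ)..t, zd s = z t - z₀ - ∑ i ∈ Finset.Icc 1 j, Θ i (z (τ i)) := by
    rw [← hz0v, ← hτ0]
    exact integral_eq_sub_sub_sum_jumps hτmono (hτ0 ▸ hz0) hzj hjump
      (hτ0 ▸ hτT ▸ hzdint) j hj t ht
  have hae : ∀ᵐ s ∂volume, s ∉ τ '' Icc 1 m :=
    measure_eq_zero_iff_ae_notMem.1 (((finite_Icc 1 m).image τ).measure_zero _)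
  have hRL : ∫ s in (0:ℝ)..t, (t - s) ^ (κ - 1) • u s
      = (1 / Real.Gamma (1 - κ)) • ∫ s in (0:ℝ)..t,
          (t - s) ^ (κ - 1) • ∫ r in (0:ℝ)..s, (s - r) ^ (-κ) • zd r := by
    rw [← intervalIntegral.integral_smul]
    refine integral_congr_ae (hae.mono fun s hs hst => ?_)
    rw [uIoc_of_le htQ.1] at hst
    rw [← hCaputo s ⟨hst.1.le, hst.2.trans htQ.2⟩
      (fun i hi1 him h => hs ⟨i, ⟨hi1, him⟩, h.symm⟩), smul_comm]
  have hΓ : 1 / Real.Gamma κ * (1 / Real.Gamma (1 - κ)) * (Real.Gamma (1 - κ) * Real.Gamma κ)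
      = 1 := by
    have := (Real.Gamma_pos_of_pos hκ.1).ne'
    have := (Real.Gamma_pos_of_pos (sub_pos.2 hκ.2)).ne'
    field_simp
  rw [hRL, integral_rpow_smul_integral_rpow_smul hκ htQ.1 hzd, hFTC, smul_smul, smul_smul, hΓ,
    one_smul]
  abel

/-- A piecewise `C¹` function in `IC(Q;X)` whose Caputo fractional derivative
(computed with the piecewise derivative `zd`) equals `u` off the impulse times, with initial
value `z₀` and jumps `Θ j` at the impulse times, is given on each interval `(τ j, τ (j+1)]`
by the impulsive fractional integral formula. -/
theorem statement_1
    {X : Type*} [NormedAddCommGroup X] [NormedSpace ℝ X] [CompleteSpace X]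
    (T : ℝ) (hT : 0 < T) (m : ℕ) (τ : ℕ → ℝ)
    (hτ0 : τ 0 = 0) (hτT : τ (m+1) = T) (hτmono : ∀ j ≤ m, τ j < τ (j+1))
    (κ : ℝ) (hκ : κ ∈ Set.Ioo (0:ℝ) 1)
    (z₀ : X) (u : ℝ → X) (hu : ContinuousOn u (Set.Icc 0 T))
    (Θ : ℕ → X → X)
    (z zd : ℝ → X) (hzIC : IC T m τ z)
    -- `z` is continuously differentiable on `[0, τ 1]` with derivative `zd`
    (hz0 : ∀ t ∈ Set.Icc (0:ℝ) (τ 1), HasDerivWithinAt z (zd t) (Set.Icc 0 (τ 1)) t)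
    (hzd0 : ContinuousOn zd (Set.Icc 0 (τ 1)))
    -- `z` is continuously differentiable on each `(τ j, τ (j+1)]` with derivative `zd`
    (hzj : ∀ j, 1 ≤ j → j ≤ m → ∀ t ∈ Set.Ioc (τ j) (τ (j+1)),
      HasDerivWithinAt z (zd t) (Set.Ioc (τ j) (τ (j+1))) t)
    (hzdj : ∀ j, 1 ≤ j → j ≤ m → ContinuousOn zd (Set.Ioc (τ j) (τ (j+1))))
    -- the piecewise derivative is bounded and integrable on `(0,T)`
    (hzdbdd : ∃ C, ∀ t ∈ Set.Ioo (0:ℝ) T, ‖zd t‖ ≤ C)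
    (hzdint : IntervalIntegrable zd MeasureTheory.volume 0 T)
    -- initial condition
    (hz0v : z 0 = z₀)
    -- impulsive jump conditions: `z (τ j ⁺) - z (τ j ⁻) = Θ j (z (τ j ⁻))`,
    -- where `z (τ j ⁻) = z (τ j)` since `z ∈ IC(Q;X)`
    (hjump : ∀ j, 1 ≤ j → j ≤ m →
      Filter.Tendsto z (nhdsWithin (τ j) (Set.Ioi (τ j))) (nhds (z (τ j) + Θ j (z (τ j)))))
    -- Caputo fractional differential equation off the impulse times
    (hCaputo : ∀ t ∈ Set.Icc (0:ℝ) T, (∀ j, 1 ≤ j → j ≤ m → t ≠ τ j) →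
      (1 / Real.Gamma (1 - κ)) • ∫ s in (0:ℝ)..t, ((t - s) ^ (-κ) : ℝ) • zd s = u t) :
    ∀ j ≤ m, ∀ t ∈ Set.Ioc (τ j) (τ (j+1)),
      z t = z₀ + (∑ i ∈ Finset.Icc 1 j, Θ i (z (τ i)))
        + (1 / Real.Gamma κ) • ∫ s in (0:ℝ)..t, ((t - s) ^ (κ - 1) : ℝ) • u s :=
  statement_1_general T m τ hτ0 hτT hτmono κ hκ z₀ u Θ z zd hz0 hzj hzdint hz0v hjump hCaputo
end

section
/- Let X be a real Banach space, κ ∈ (0,1), and k₁, k₂, d₁,…,d_m ≥ 0. Suppose z ∈ IC(Q;X) satisfies ‖z(t)‖ ≤ k₁ + k₂ ∫₀^t (t−s)^{κ−1} ‖z(s)‖ ds + Σ_{j : 0<τⱼ<t} dⱼ ‖z(τⱼ⁻)‖ for all t ∈ Q. Then, with D* = max{d₁,…,d_m} and E_κ the Mittag-Leffler function, for each j = 0,1,…,m and every t ∈ (τⱼ, τⱼ₊₁]: ‖z(t)‖ ≤ k₁ [1 + D* E_κ(k₂ Γ(κ) t^κ)]^j E_κ(k₂ Γ(κ) t^κ).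 -/
/-!
On `[0, τ (j+1)]` only the jump times `τ 1, …, τ j` can lie below the current time, so there the
impulsive inequality is a plain weakly singular one with constant
`A j = k₁ + ∑_{i ≤ j} d i ‖z (τ i)‖`. Iterating it against the kernel `(t - s)^(κ-1)` produces one
more term of the Mittag-Leffler series at each step (a Beta integral), which gives Henry's bound
`‖z s‖ ≤ A j E_κ(k₂ Γ(κ) s^κ)`. Evaluated at the jump times below `t`, this gives
`A j ≤ k₁ + D* E_κ(k₂ Γ(κ) t^κ) ∑_{i < j} A i`, and a discrete Gronwall argument turns that into
`A j ≤ k₁ (1 + D* E_κ(k₂ Γ(κ) t^κ))^j`.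
-/

open MeasureTheory intervalIntegral Set Filter

/-- The Mittag-Leffler function `E_κ(h) = ∑_{i=0}^∞ h^i / Γ(κ i + 1)`. -/
noncomputable def mittagLeffler (κ : ℝ) (h : ℝ) : ℝ :=
  ∑' i : ℕ, h ^ i / Real.Gamma (κ * i + 1)

open Real Topology

namespace Real

/-- Gautschi's inequality: log-convexity of `Γ` between `x + κ` and `x + κ + 1`. -/
theorem Gamma_add_one_le_Gamma_add_mul_rpow {κ x : ℝ} (hκ : κ ∈ Ioo (0 : ℝ) 1) (hx : 0 < x) :
    Gamma (x + 1) ≤ Gamma (x + κ) * (x + κ) ^ (1 - κ) := by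
  obtain ⟨hκ0, hκ1⟩ := hκ
  have hxκ : 0 < x + κ := by linarith
  have hΓ : 0 < Gamma (x + κ) := Gamma_pos_of_pos hxκ
  have h := Gamma_mul_add_mul_le_rpow_Gamma_mul_rpow_Gamma hxκ (by linarith : 0 < x + κ + 1)
    hκ0 (sub_pos.2 hκ1) (add_sub_cancel κ 1)
  rw [show κ * (x + κ) + (1 - κ) * (x + κ + 1) = x + 1 by ring, Gamma_add_one hxκ.ne',
    mul_rpow hxκ.le hΓ.le] at h
  calc Gamma (x + 1) ≤ Gamma (x + κ) ^ κ * ((x + κ) ^ (1 - κ) * Gamma (x + κ) ^ (1 - κ)) := h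
    _ = Gamma (x + κ) ^ (κ + (1 - κ)) * (x + κ) ^ (1 - κ) := by rw [rpow_add hΓ]; ring
    _ = Gamma (x + κ) * (x + κ) ^ (1 - κ) := by rw [add_sub_cancel, rpow_one]

theorem tendsto_Gamma_div_Gamma_add_atTop {κ : ℝ} (hκ : κ ∈ Ioo (0 : ℝ) 1) :
    Tendsto (fun y => Gamma y / Gamma (y + κ)) atTop (𝓝 0) := by
  have hκ0 := hκ.1
  have hupper : Tendsto (fun y : ℝ => (y + κ) ^ (-κ) * (1 + κ / y)) atTop (𝓝 0) := by
    have h1 := (tendsto_rpow_neg_atTop hκ0).comp (tendsto_atTop_add_const_right _ κ tendsto_id)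
    have h2 := (tendsto_const_nhds (x := (1 : ℝ))).add
      ((tendsto_const_nhds (x := κ)).div_atTop tendsto_id)
    simpa using h1.mul h2
  refine tendsto_of_tendsto_of_tendsto_of_le_of_le' tendsto_const_nhds hupper ?_ ?_
  · filter_upwards [eventually_gt_atTop 0] with y hy
    exact div_nonneg (Gamma_pos_of_pos hy).le (Gamma_pos_of_pos (by linarith)).le
  · filter_upwards [eventually_gt_atTop 0] with y hy
    have hyκ : 0 < y + κ := by linarith
    have h := Gamma_add_one_le_Gamma_add_mul_rpow hκ hy
    rw [Gamma_add_one hy.ne'] at h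
    rw [div_le_iff₀ (Gamma_pos_of_pos hyκ)]
    calc Gamma y = y * Gamma y / y := by field_simp
      _ ≤ Gamma (y + κ) * (y + κ) ^ (1 - κ) / y := by gcongr
      _ = (y + κ) ^ (-κ) * (1 + κ / y) * Gamma (y + κ) := by
        rw [sub_eq_add_neg, add_comm 1, rpow_add hyκ, rpow_one]
        field_simp

end Real

theorem summable_mittagLeffler {κ : ℝ} (hκ : κ ∈ Ioo (0 : ℝ) 1) (h : ℝ) :
    Summable (fun i : ℕ => h ^ i / Gamma (κ * i + 1)) := by
  have hκ0 := hκ.1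
  have hy : Tendsto (fun n : ℕ => κ * n + 1) atTop atTop :=
    tendsto_atTop_add_const_right _ 1
      ((tendsto_natCast_atTop_atTop (R := ℝ)).const_mul_atTop hκ0)
  have hratio := ((tendsto_Gamma_div_Gamma_add_atTop hκ).comp hy).const_mul |h|
  rw [mul_zero] at hratio
  refine summable_of_ratio_norm_eventually_le (r := 1 / 2) (by norm_num) ?_
  filter_upwards [hratio.eventually_le_const (by norm_num : (0 : ℝ) < 1 / 2)] with n hn
  have hΓ : 0 < Gamma (κ * n + 1) := Gamma_pos_of_pos (by positivity)
  have hΓ' : 0 < Gamma (κ * n + 1 + κ) := Gamma_pos_of_pos (by positivity)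
  simp only [Function.comp_apply] at hn
  rw [norm_div, norm_div, norm_pow, norm_pow, Real.norm_of_nonneg hΓ.le, Nat.cast_succ,
    show κ * (n + 1 : ℝ) + 1 = κ * n + 1 + κ by ring, Real.norm_of_nonneg hΓ'.le]
  calc ‖h‖ ^ (n + 1) / Gamma (κ * n + 1 + κ)
      = |h| * (Gamma (κ * n + 1) / Gamma (κ * n + 1 + κ)) * (‖h‖ ^ n / Gamma (κ * n + 1)) := by
        rw [Real.norm_eq_abs]; field_simp; ring
    _ ≤ 1 / 2 * (‖h‖ ^ n / Gamma (κ * n + 1)) := by gcongr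

theorem one_le_mittagLeffler {κ h : ℝ} (hκ : κ ∈ Ioo (0 : ℝ) 1) (hh : 0 ≤ h) :
    1 ≤ mittagLeffler κ h := by
  have h0 := (summable_mittagLeffler hκ h).le_tsum 0 fun i _ =>
    div_nonneg (pow_nonneg hh i) (Gamma_pos_of_pos (by have := hκ.1; positivity)).le
  simpa [mittagLeffler] using h0

theorem mittagLeffler_mono {κ : ℝ} (hκ : κ ∈ Ioo (0 : ℝ) 1) :
    MonotoneOn (mittagLeffler κ) (Ici 0) := by
  intro h hh h' _ hle
  refine (summable_mittagLeffler hκ h).tsum_le_tsum (fun i => ?_) (summable_mittagLeffler hκ h')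
  have : 0 < Gamma (κ * i + 1) := Gamma_pos_of_pos (by have := hκ.1; positivity)
  exact div_le_div_of_nonneg_right (pow_le_pow_left₀ hh hle i) this.le

theorem integral_rpow_mul_sub_rpow {p q a : ℝ} (hp : 0 < p) (hq : 0 < q) (ha : 0 < a) :
    ∫ x in 0..a, x ^ (p - 1) * (a - x) ^ (q - 1)
      = Gamma p * Gamma q / Gamma (p + q) * a ^ (p + q - 1) := by
  apply Complex.ofReal_injective
  rw [← intervalIntegral.integral_ofReal]
  have hcongr : ∫ x in 0..a, ((x ^ (p - 1) * (a - x) ^ (q - 1) : ℝ) : ℂ)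
      = ∫ x in 0..a, (x : ℂ) ^ ((p : ℂ) - 1) * ((a : ℂ) - x) ^ ((q : ℂ) - 1) := by
    refine integral_congr fun x hx => ?_
    rw [uIcc_of_le ha.le] at hx
    rw [Complex.ofReal_mul, Complex.ofReal_cpow hx.1, Complex.ofReal_cpow (sub_nonneg.2 hx.2)]
    push_cast
    rfl
  rw [hcongr, Complex.betaIntegral_scaled _ _ ha,
    Complex.betaIntegral_eq_Gamma_mul_div _ _ (by simpa using hp) (by simpa using hq),
    ← Complex.ofReal_add, Complex.Gamma_ofReal, Complex.Gamma_ofReal, Complex.Gamma_ofReal,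
    Complex.ofReal_mul, Complex.ofReal_cpow ha.le]
  push_cast
  ring

theorem intervalIntegrable_rpow_mul_sub_rpow {p q a : ℝ} (hp : 0 < p) (hq : 0 < q)
    (ha : 0 < a) : IntervalIntegrable (fun x => x ^ (p - 1) * (a - x) ^ (q - 1)) volume 0 a := by
  refine intervalIntegrable_of_integral_ne_zero ?_
  rw [integral_rpow_mul_sub_rpow hp hq ha]
  have := Gamma_pos_of_pos hp
  have := Gamma_pos_of_pos hq
  have := Gamma_pos_of_pos (add_pos hp hq)
  positivity

theorem integral_kernel_mul_rpow {κ r t : ℝ} (hκ : 0 < κ) (hr : -1 < r) (ht : 0 < t) :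
    ∫ s in 0..t, (t - s) ^ (κ - 1) * s ^ r
      = Gamma (r + 1) * Gamma κ / Gamma (r + 1 + κ) * t ^ (r + κ) := by
  have h := integral_rpow_mul_sub_rpow (by linarith : 0 < r + 1) hκ ht
  rw [add_sub_cancel_right, show r + 1 + κ - 1 = r + κ by ring] at h
  simpa only [mul_comm] using h

theorem intervalIntegrable_kernel_mul_rpow {κ r t : ℝ} (hκ : 0 < κ) (hr : -1 < r) (ht : 0 < t) :
    IntervalIntegrable (fun s => (t - s) ^ (κ - 1) * s ^ r) volume 0 t := by
  have h := intervalIntegrable_rpow_mul_sub_rpow (by linarith : 0 < r + 1) hκ ht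
  simpa only [add_sub_cancel_right, mul_comm] using h

noncomputable def mittagLefflerTerm (κ K : ℝ) (i : ℕ) (t : ℝ) : ℝ :=
  (K * t ^ κ) ^ i / Gamma (κ * i + 1)

section FractionalGronwall

variable {κ : ℝ}

theorem mittagLefflerTerm_eq {K t : ℝ} (ht : 0 ≤ t) (i : ℕ) :
    mittagLefflerTerm κ K i t = K ^ i / Gamma (κ * i + 1) * t ^ (κ * i) := by
  rw [mittagLefflerTerm, rpow_mul ht, rpow_natCast, mul_pow]
  ring

theorem mittagLefflerTerm_zero (K t : ℝ) : mittagLefflerTerm κ K 0 t = 1 := by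
  simp [mittagLefflerTerm]

theorem intervalIntegrable_kernel_mul_mittagLefflerTerm (hκ : 0 < κ) (K : ℝ) (i : ℕ) {t : ℝ}
    (ht : 0 ≤ t) :
    IntervalIntegrable (fun s => (t - s) ^ (κ - 1) * mittagLefflerTerm κ K i s) volume 0 t := by
  rcases ht.eq_or_lt with rfl | ht
  · exact IntervalIntegrable.refl
  have hint := (intervalIntegrable_kernel_mul_rpow (r := κ * i) hκ
    (neg_one_lt_zero.trans_le (by positivity)) ht).const_mul (K ^ i / Gamma (κ * i + 1))
  refine (intervalIntegrable_congr fun s hs => ?_).1 hint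
  rw [uIoc_of_le ht.le] at hs
  simp only [mittagLefflerTerm_eq hs.1.le]
  ring

theorem integral_kernel_mul_mittagLefflerTerm (hκ : 0 < κ) (b : ℝ) (i : ℕ) {t : ℝ}
    (ht : 0 ≤ t) :
    b * ∫ s in 0..t, (t - s) ^ (κ - 1) * mittagLefflerTerm κ (b * Gamma κ) i s
      = mittagLefflerTerm κ (b * Gamma κ) (i + 1) t := by
  rcases ht.eq_or_lt with rfl | ht
  · simp [mittagLefflerTerm, zero_rpow hκ.ne']
  have hcongr : ∫ s in 0..t, (t - s) ^ (κ - 1) * mittagLefflerTerm κ (b * Gamma κ) i s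
      = ∫ s in 0..t, (b * Gamma κ) ^ i / Gamma (κ * i + 1) * ((t - s) ^ (κ - 1) * s ^ (κ * i)) := by
    refine integral_congr fun s hs => ?_
    rw [uIcc_of_le ht.le] at hs
    simp only [mittagLefflerTerm_eq hs.1]
    ring
  rw [hcongr, intervalIntegral.integral_const_mul,
    integral_kernel_mul_rpow hκ (neg_one_lt_zero.trans_le (by positivity)) ht,
    mittagLefflerTerm_eq ht.le, Nat.cast_succ, show κ * i + 1 + κ = κ * (i + 1) + 1 by ring,
    show κ * i + κ = κ * (i + 1) by ring]
  field_simp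
  ring


/-- The bound on `u` obtained by substituting the inequality `n` times into itself, starting
from the crude bound `u ≤ C`. -/
noncomputable def picardBound (κ K a C : ℝ) (n : ℕ) (t : ℝ) : ℝ :=
  a * ∑ i ∈ Finset.range n, mittagLefflerTerm κ K i t + C * mittagLefflerTerm κ K n t

theorem intervalIntegrable_kernel_mul_picardBound (hκ : 0 < κ) (K a C : ℝ) (n : ℕ) {t : ℝ}
    (ht : 0 ≤ t) :
    IntervalIntegrable (fun s => (t - s) ^ (κ - 1) * picardBound κ K a C n s) volume 0 t := by
  have hint := fun i => intervalIntegrable_kernel_mul_mittagLefflerTerm hκ K i ht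
  have hsum := IntervalIntegrable.sum (Finset.range n) fun i _ => (hint i).const_mul a
  rw [Finset.sum_fn] at hsum
  simp only [picardBound, mul_add, Finset.mul_sum, mul_left_comm _ a, mul_left_comm _ C]
  exact hsum.add ((hint n).const_mul C)

theorem add_integral_kernel_mul_picardBound (hκ : 0 < κ) (a b C : ℝ) (n : ℕ) {t : ℝ}
    (ht : 0 ≤ t) :
    a + b * ∫ s in 0..t, (t - s) ^ (κ - 1) * picardBound κ (b * Gamma κ) a C n s
      = picardBound κ (b * Gamma κ) a C (n + 1) t := by
  have hint := fun i => intervalIntegrable_kernel_mul_mittagLefflerTerm hκ (b * Gamma κ) i ht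
  have hsum := IntervalIntegrable.sum (Finset.range n) fun i _ => (hint i).const_mul a
  rw [Finset.sum_fn] at hsum
  simp only [picardBound, mul_add, Finset.mul_sum, mul_left_comm _ a, mul_left_comm _ C]
  rw [integral_add hsum ((hint n).const_mul C),
    integral_finsetSum fun i _ => (hint i).const_mul a]
  simp only [intervalIntegral.integral_const_mul, mul_add, Finset.mul_sum, mul_left_comm b,
    integral_kernel_mul_mittagLefflerTerm hκ b _ ht, Finset.sum_range_succ' _ n,
    mittagLefflerTerm_zero]
  ring

theorem tendsto_picardBound (hκ : κ ∈ Ioo (0 : ℝ) 1) (K a C t : ℝ) :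
    Tendsto (fun n => picardBound κ K a C n t) atTop
      (𝓝 (a * mittagLeffler κ (K * t ^ κ))) := by
  have hsum := summable_mittagLeffler hκ (K * t ^ κ)
  simpa [picardBound, mittagLefflerTerm, mittagLeffler] using
    (hsum.hasSum.tendsto_sum_nat.const_mul a).add (hsum.tendsto_atTop_zero.const_mul C)

theorem intervalIntegrable_kernel_mul_of_bdd {u : ℝ → ℝ} {C T t : ℝ} (hκ : 0 < κ)
    (hmeas : AEStronglyMeasurable u (volume.restrict (Icc 0 T)))
    (hbdd : ∀ s ∈ Icc 0 T, ‖u s‖ ≤ C) (ht : t ∈ Icc 0 T) :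
    IntervalIntegrable (fun s => (t - s) ^ (κ - 1) * u s) volume 0 t := by
  have hsub : Ioc 0 t ⊆ Icc 0 T := fun s hs => ⟨hs.1.le, hs.2.trans ht.2⟩
  have hkernel := intervalIntegrable_kernel_mul_mittagLefflerTerm hκ 0 0 ht.1
  simp only [mittagLefflerTerm_zero, mul_one] at hkernel
  rw [intervalIntegrable_iff_integrableOn_Ioc_of_le ht.1] at hkernel ⊢
  exact hkernel.mul_bdd (hmeas.mono_set hsub)
    ((ae_restrict_iff' measurableSet_Ioc).2 (ae_of_all _ fun s hs => hbdd s (hsub hs)))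

theorem le_picardBound {u : ℝ → ℝ} {T a b C : ℝ} (hκ : 0 < κ) (hb : 0 ≤ b)
    (hmeas : AEStronglyMeasurable u (volume.restrict (Icc 0 T)))
    (hbdd : ∀ s ∈ Icc 0 T, ‖u s‖ ≤ C)
    (h : ∀ t ∈ Icc 0 T, u t ≤ a + b * ∫ s in 0..t, (t - s) ^ (κ - 1) * u s) (n : ℕ) :
    ∀ t ∈ Icc 0 T, u t ≤ picardBound κ (b * Gamma κ) a C n t := by
  induction n with
  | zero =>
    intro t ht
    simpa [picardBound, mittagLefflerTerm_zero] using (le_abs_self _).trans (hbdd t ht)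
  | succ n ih =>
    intro t ht
    have hmono := integral_mono_on ht.1 (intervalIntegrable_kernel_mul_of_bdd hκ hmeas hbdd ht)
      (intervalIntegrable_kernel_mul_picardBound hκ _ a C n ht.1)
      fun s hs => mul_le_mul_of_nonneg_left (ih s ⟨hs.1, hs.2.trans ht.2⟩)
        (rpow_nonneg (sub_nonneg.2 hs.2) _)
    calc u t ≤ a + b * ∫ s in 0..t, (t - s) ^ (κ - 1) * u s := h t ht
      _ ≤ a + b * ∫ s in 0..t, (t - s) ^ (κ - 1) * picardBound κ (b * Gamma κ) a C n s := by
        gcongr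
      _ = picardBound κ (b * Gamma κ) a C (n + 1) t :=
        add_integral_kernel_mul_picardBound hκ a b C n ht.1

theorem le_mul_mittagLeffler_of_le_add_integral {u : ℝ → ℝ} {T a b C : ℝ}
    (hκ : κ ∈ Ioo (0 : ℝ) 1) (hb : 0 ≤ b)
    (hmeas : AEStronglyMeasurable u (volume.restrict (Icc 0 T)))
    (hbdd : ∀ s ∈ Icc 0 T, ‖u s‖ ≤ C)
    (h : ∀ t ∈ Icc 0 T, u t ≤ a + b * ∫ s in 0..t, (t - s) ^ (κ - 1) * u s) :
    ∀ t ∈ Icc 0 T, u t ≤ a * mittagLeffler κ (b * Gamma κ * t ^ κ) := fun t ht =>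
  ge_of_tendsto' (tendsto_picardBound hκ _ a C t) fun n =>
    le_picardBound hκ.1 hb hmeas hbdd h n t ht

end FractionalGronwall

theorem IsCompact.bddAbove_image_of_forall_isBoundedUnder {α β : Type*} [TopologicalSpace α]
    [Preorder β] [IsDirectedOrder β] [Nonempty β] {K : Set α} {f : α → β} (hK : IsCompact K)
    (hf : ∀ x ∈ K, IsBoundedUnder (· ≤ ·) (𝓝[K] x) f) : BddAbove (f '' K) := by
  refine hK.induction_on (p := fun s => BddAbove (f '' s)) (by simp)
    (fun s t hst ht => ht.mono (image_mono hst))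
    (fun s t hs ht => by simpa only [image_union] using hs.union ht) fun x hx => ?_
  obtain ⟨s, hs, hev⟩ := isBoundedUnder_iff_eventually_bddAbove.1 (hf x hx)
  exact ⟨s, hev, hs⟩

namespace IC

variable {X : Type*} [NormedAddCommGroup X] {T : ℝ} {m : ℕ} {τ : ℕ → ℝ} {z : ℝ → X}

theorem isBoundedUnder_norm (hz : IC T m τ z) {x : ℝ} (hx : x ∈ Icc 0 T) :
    IsBoundedUnder (· ≤ ·) (𝓝[Icc 0 T] x) (fun s => ‖z s‖) := by
  by_cases hjump : ∃ j, 1 ≤ j ∧ j ≤ m ∧ x = τ j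
  · obtain ⟨j, hj1, hjm, rfl⟩ := hjump
    obtain ⟨hleft, L, hright⟩ := hz.2 j hj1 hjm
    have hleft' : Tendsto z (𝓝[≤] τ j) (𝓝 (z (τ j))) :=
      continuousWithinAt_Iio_iff_Iic.1 hleft
    refine IsBoundedUnder.mono nhdsWithin_le_nhds ?_
    rw [← nhdsLE_sup_nhdsGT, IsBoundedUnder, map_sup]
    exact isBounded_sup hleft'.norm.isBoundedUnder_le hright.norm.isBoundedUnder_le
  · push Not at hjump
    exact (hz.1 x hx fun j hj1 hjm => hjump j hj1 hjm).norm.isBoundedUnder_le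

theorem exists_norm_le (hz : IC T m τ z) : ∃ C, ∀ s ∈ Icc 0 T, ‖z s‖ ≤ C := by
  obtain ⟨C, hC⟩ := isCompact_Icc.bddAbove_image_of_forall_isBoundedUnder
    fun x hx => hz.isBoundedUnder_norm hx
  exact ⟨C, fun s hs => hC (mem_image_of_mem _ hs)⟩

theorem aestronglyMeasurable (hz : IC T m τ z) :
    AEStronglyMeasurable z (volume.restrict (Icc 0 T)) := by
  have hF : (τ '' Icc 1 m).Finite := (finite_Icc 1 m).image τ
  have hcont : ContinuousOn z (Icc 0 T \ τ '' Icc 1 m) := fun s hs =>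
    (hz.1 s hs.1 fun j hj1 hjm hsj => hs.2 ⟨j, ⟨hj1, hjm⟩, hsj.symm⟩).mono sdiff_subset
  have hae : Icc 0 T \ τ '' Icc 1 m =ᵐ[volume] Icc (0 : ℝ) T :=
    sdiff_ae_eq_self.2 (measure_mono_null inter_subset_right (hF.measure_zero _))
  rw [← Measure.restrict_congr_set hae]
  exact hcont.aestronglyMeasurable (measurableSet_Icc.diff hF.measurableSet)

end IC

theorem le_mul_one_add_pow_of_le_add_mul_sum {x : ℕ → ℝ} {k c : ℝ} {N : ℕ} (hc : 0 ≤ c)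
    (h : ∀ j ≤ N, x j ≤ k + c * ∑ i ∈ Finset.range j, x i) :
    ∀ j ≤ N, x j ≤ k * (1 + c) ^ j := by
  intro j
  induction j using Nat.strong_induction_on with
  | _ j ih =>
    intro hj
    calc x j ≤ k + c * ∑ i ∈ Finset.range j, x i := h j hj
      _ ≤ k + c * ∑ i ∈ Finset.range j, k * (1 + c) ^ i := by
        gcongr with i hi
        exact ih i (Finset.mem_range.1 hi) (by have := Finset.mem_range.1 hi; omega)
      _ = k * (1 + c) ^ j := by
        rw [← Finset.mul_sum]
        linear_combination k * geom_sum_mul (1 + c) j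

theorem sum_filter_lt_le_sum_range {m i : ℕ} {τ g : ℕ → ℝ} {s : ℝ}
    (hτ : MonotoneOn τ (Iic (m + 1))) (hi : i ≤ m) (hg : ∀ j, 1 ≤ j → j ≤ m → 0 ≤ g j)
    (hs : s ≤ τ (i + 1)) :
    ∑ j ∈ (Finset.Icc 1 m).filter (fun j => τ j < s), g j ≤ ∑ l ∈ Finset.range i, g (l + 1) := by
  rw [Finset.range_eq_Ico, Finset.sum_Ico_add']
  refine Finset.sum_le_sum_of_subset_of_nonneg (fun j hj => ?_) fun j hj _ => ?_
  · simp only [Finset.mem_filter, Finset.mem_Icc] at hj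
    refine Finset.mem_Ico.2 ⟨hj.1.1, lt_of_not_ge fun hij => ?_⟩
    have := hτ (by simp; omega) (by simp; omega) hij
    linarith [hj.2]
  · obtain ⟨hj1, hji⟩ := Finset.mem_Ico.1 hj
    exact hg j hj1 (by omega)

section Impulsive

variable {X : Type*} [NormedAddCommGroup X] {m : ℕ} {τ d : ℕ → ℝ} {z : ℝ → X} {k₁ : ℝ}

/-- `k₁ + ∑_{l=1}^{i} d l ‖z (τ l)‖`: the constant of the jump-free inequality on
`[0, τ (i + 1)]`. -/
noncomputable def jumpConst (k₁ : ℝ) (d τ : ℕ → ℝ) (z : ℝ → X) (i : ℕ) : ℝ :=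
  k₁ + ∑ l ∈ Finset.range i, d (l + 1) * ‖z (τ (l + 1))‖

theorem jumpConst_nonneg (hk₁ : 0 ≤ k₁) (hd : ∀ j, 1 ≤ j → j ≤ m → 0 ≤ d j) {i : ℕ}
    (hi : i ≤ m) : 0 ≤ jumpConst k₁ d τ z i :=
  add_nonneg hk₁ (Finset.sum_nonneg fun l hl =>
    mul_nonneg (hd _ (by omega) (by have := Finset.mem_range.1 hl; omega)) (norm_nonneg _))

theorem norm_le_jumpConst_mul_mittagLeffler {T κ k₂ : ℝ} (hτ : MonotoneOn τ (Iic (m + 1)))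
    (hτT : τ (m + 1) = T) (hκ : κ ∈ Ioo (0 : ℝ) 1) (hk₂ : 0 ≤ k₂)
    (hd : ∀ j, 1 ≤ j → j ≤ m → 0 ≤ d j) (hz : IC T m τ z)
    (hineq : ∀ t ∈ Icc (0 : ℝ) T,
      ‖z t‖ ≤ k₁ + k₂ * (∫ s in (0 : ℝ)..t, ((t - s) ^ (κ - 1) : ℝ) * ‖z s‖)
        + ∑ j ∈ (Finset.Icc 1 m).filter (fun j => τ j < t), d j * ‖z (τ j)‖)
    {i : ℕ} (hi : i ≤ m) :
    ∀ s ∈ Icc 0 (τ (i + 1)),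
      ‖z s‖ ≤ jumpConst k₁ d τ z i * mittagLeffler κ (k₂ * Gamma κ * s ^ κ) := by
  have hsub : Icc 0 (τ (i + 1)) ⊆ Icc 0 T :=
    Icc_subset_Icc_right (hτT ▸ hτ (by simp; omega) (by simp) (by omega))
  obtain ⟨C, hC⟩ := hz.exists_norm_le
  refine le_mul_mittagLeffler_of_le_add_integral hκ hk₂
    (hz.aestronglyMeasurable.norm.mono_set hsub) (fun s hs => by simpa using hC s (hsub hs))
    fun s hs => ?_
  have hjumps := sum_filter_lt_le_sum_range (g := fun j => d j * ‖z (τ j)‖) hτ hi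
    (fun j hj1 hjm => mul_nonneg (hd j hj1 hjm) (norm_nonneg _)) hs.2
  rw [jumpConst]
  linarith [hineq s (hsub hs)]

theorem jumpConst_le_mul_one_add_pow {κ k₂ D t : ℝ} (hτ : MonotoneOn τ (Iic (m + 1)))
    (hτ0 : 0 ≤ τ 0) (hκ : κ ∈ Ioo (0 : ℝ) 1) (hk₁ : 0 ≤ k₁) (hk₂ : 0 ≤ k₂)
    (hd : ∀ j, 1 ≤ j → j ≤ m → 0 ≤ d j) (hD : ∀ j ∈ Icc 1 m, d j ≤ D) (hD0 : 0 ≤ D)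
    (hbound : ∀ i ≤ m, ∀ s ∈ Icc 0 (τ (i + 1)),
      ‖z s‖ ≤ jumpConst k₁ d τ z i * mittagLeffler κ (k₂ * Gamma κ * s ^ κ))
    {j : ℕ} (hj : j ≤ m) (ht : τ j ≤ t) :
    jumpConst k₁ d τ z j ≤ k₁ * (1 + D * mittagLeffler κ (k₂ * Gamma κ * t ^ κ)) ^ j := by
  have hτ_nonneg : ∀ i ≤ m + 1, 0 ≤ τ i := fun i hi =>
    hτ0.trans (hτ (by simp) (by simpa using hi) (Nat.zero_le i))
  have ht0 : 0 ≤ t := (hτ_nonneg j (by omega)).trans ht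
  have hK : 0 ≤ k₂ * Gamma κ := mul_nonneg hk₂ (Gamma_pos_of_pos hκ.1).le
  have hE := one_le_mittagLeffler hκ (mul_nonneg hK (rpow_nonneg ht0 κ))
  refine le_mul_one_add_pow_of_le_add_mul_sum (mul_nonneg hD0 (zero_le_one.trans hE))
    (fun i hi => ?_) j le_rfl
  rw [jumpConst, Finset.mul_sum]
  refine add_le_add_right (Finset.sum_le_sum fun l hl => ?_) k₁
  have hl : l + 1 ≤ j := by have := Finset.mem_range.1 hl; omega
  have hτl0 := hτ_nonneg (l + 1) (by omega)
  have hτl : τ (l + 1) ≤ t := (hτ (by simp; omega) (by simp; omega) hl).trans ht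
  have hEl := mittagLeffler_mono hκ (mul_nonneg hK (rpow_nonneg hτl0 κ))
    (mul_nonneg hK (rpow_nonneg ht0 κ))
    (mul_le_mul_of_nonneg_left (rpow_le_rpow hτl0 hτl hκ.1.le) hK)
  calc d (l + 1) * ‖z (τ (l + 1))‖
      ≤ D * (jumpConst k₁ d τ z l * mittagLeffler κ (k₂ * Gamma κ * t ^ κ)) := by
        refine mul_le_mul (hD _ ⟨by omega, by omega⟩) ?_ (norm_nonneg _) hD0
        exact (hbound l (by omega) _ ⟨hτl0, le_rfl⟩).trans
          (mul_le_mul_of_nonneg_left hEl (jumpConst_nonneg hk₁ hd (by omega)))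
    _ = D * mittagLeffler κ (k₂ * Gamma κ * t ^ κ) * jumpConst k₁ d τ z l := by ring

end Impulsive

theorem statement_2_general
    {X : Type*} [NormedAddCommGroup X]
    (T : ℝ) (m : ℕ) (τ : ℕ → ℝ)
    (hτ0 : τ 0 = 0) (hτT : τ (m+1) = T) (hτmono : ∀ j ≤ m, τ j < τ (j+1))
    (κ : ℝ) (hκ : κ ∈ Set.Ioo (0:ℝ) 1)
    (k₁ k₂ : ℝ) (hk₁ : 0 ≤ k₁) (hk₂ : 0 ≤ k₂)
    (d : ℕ → ℝ) (hd : ∀ j, 1 ≤ j → j ≤ m → 0 ≤ d j)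
    (Dstar : ℝ) (hDstar : IsGreatest ((fun j => d j) '' (Set.Icc 1 m)) Dstar)
    (z : ℝ → X) (hzIC : IC T m τ z)
    (hineq : ∀ t ∈ Set.Icc (0:ℝ) T,
      ‖z t‖ ≤ k₁ + k₂ * (∫ s in (0:ℝ)..t, ((t - s) ^ (κ - 1) : ℝ) * ‖z s‖)
        + ∑ j ∈ (Finset.Icc 1 m).filter (fun j => τ j < t), d j * ‖z (τ j)‖) :
    ∀ j ≤ m, ∀ t ∈ Set.Ioc (τ j) (τ (j+1)),
      ‖z t‖ ≤ k₁ * (1 + Dstar * mittagLeffler κ (k₂ * Real.Gamma κ * t ^ κ)) ^ j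
        * mittagLeffler κ (k₂ * Real.Gamma κ * t ^ κ) := by
  have hτ : MonotoneOn τ (Iic (m + 1)) :=
    (strictMonoOn_Iic_of_lt_succ fun j hj => by simpa using hτmono j (by omega)).monotoneOn
  have hbound := fun i (hi : i ≤ m) =>
    norm_le_jumpConst_mul_mittagLeffler hτ hτT hκ hk₂ hd hzIC hineq hi
  have hD0 : 0 ≤ Dstar := by
    obtain ⟨i, hi, rfl⟩ := hDstar.1
    exact hd i hi.1 hi.2
  intro j hj t ht
  have ht0 : 0 ≤ t := (hτ0 ▸ hτ (by simp) (by simp; omega) (Nat.zero_le j)).trans ht.1.le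
  have hE := one_le_mittagLeffler hκ
    (mul_nonneg (mul_nonneg hk₂ (Gamma_pos_of_pos hκ.1).le) (rpow_nonneg ht0 κ))
  calc ‖z t‖ ≤ jumpConst k₁ d τ z j * mittagLeffler κ (k₂ * Gamma κ * t ^ κ) :=
        hbound j hj t ⟨ht0, ht.2⟩
    _ ≤ _ := mul_le_mul_of_nonneg_right
        (jumpConst_le_mul_one_add_pow hτ hτ0.ge hκ hk₁ hk₂ hd (fun i hi => hDstar.2 ⟨i, hi, rfl⟩)
          hD0 hbound hj ht.1.le) (zero_le_one.trans hE)

/-- impulsive fractional Gronwall inequality. -/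
theorem statement_2
    {X : Type*} [NormedAddCommGroup X]
    (T : ℝ) (hT : 0 < T) (m : ℕ) (hm : 1 ≤ m) (τ : ℕ → ℝ)
    (hτ0 : τ 0 = 0) (hτT : τ (m+1) = T) (hτmono : ∀ j ≤ m, τ j < τ (j+1))
    (κ : ℝ) (hκ : κ ∈ Set.Ioo (0:ℝ) 1)
    (k₁ k₂ : ℝ) (hk₁ : 0 ≤ k₁) (hk₂ : 0 ≤ k₂)
    (d : ℕ → ℝ) (hd : ∀ j, 1 ≤ j → j ≤ m → 0 ≤ d j)
    (Dstar : ℝ) (hDstar : IsGreatest ((fun j => d j) '' (Set.Icc 1 m)) Dstar)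
    (z : ℝ → X) (hzIC : IC T m τ z)
    (hineq : ∀ t ∈ Set.Icc (0:ℝ) T,
      ‖z t‖ ≤ k₁ + k₂ * (∫ s in (0:ℝ)..t, ((t - s) ^ (κ - 1) : ℝ) * ‖z s‖)
        + ∑ j ∈ (Finset.Icc 1 m).filter (fun j => τ j < t), d j * ‖z (τ j)‖) :
    ∀ j ≤ m, ∀ t ∈ Set.Ioc (τ j) (τ (j+1)),
      ‖z t‖ ≤ k₁ * (1 + Dstar * mittagLeffler κ (k₂ * Real.Gamma κ * t ^ κ)) ^ j
        * mittagLeffler κ (k₂ * Real.Gamma κ * t ^ κ) :=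
  statement_2_general T m τ hτ0 hτT hτmono κ hκ k₁ k₂ hk₁ hk₂ d hd Dstar hDstar z hzIC hineq
end

section
/- Let U₁ and U₂ be real reflexive Banach spaces, ψ : U₁ → U₂ a linear, continuous, compact operator with adjoint ψ* : U₂* → U₁* given by ψ*η = η ∘ ψ, and let φ : U₂ → ℝ be a locally Lipschitz functional whose Clarke generalized gradient satisfies ‖η‖_{U₂*} ≤ c_φ (1 + ‖u‖_{U₂}) for all η ∈ ∂φ(u) and u ∈ U₂, where c_φ > 0 is a constant. Then the set-valued operator W : U₁ ⇒ U₁* defined by W(u) = ψ* ∂φ(ψ(u)) is pseudomonotone. -/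
open Filter Topology NormedSpace

/-- The Clarke generalized directional derivative of `F` at `x` in the direction `v`:
`F°(x;v) = limsup_{w → x, μ → 0⁺} (F (w + μ v) - F w) / μ`. -/
noncomputable def clarkeDeriv {Y : Type*} [NormedAddCommGroup Y] [NormedSpace ℝ Y]
    (F : Y → ℝ) (x v : Y) : ℝ :=
  Filter.limsup (fun p : Y × ℝ => (F (p.1 + p.2 • v) - F p.1) / p.2)
    ((nhds x) ×ˢ (nhdsWithin (0:ℝ) (Set.Ioi 0)))

/-- The Clarke generalized gradient of `F` at `x`:
`∂F(x) = {η ∈ Y* : ⟨η, v⟩ ≤ F°(x;v) for all v}`. -/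
def clarkeGrad {Y : Type*} [NormedAddCommGroup Y] [NormedSpace ℝ Y]
    (F : Y → ℝ) (x : Y) : Set (StrongDual ℝ Y) :=
  {η | ∀ v : Y, η v ≤ clarkeDeriv F x v}

/-- A set-valued operator `G : Z ⇒ Z*` is pseudomonotone if (i) its values are nonempty,
closed, bounded and convex; (ii) its restriction to every finite-dimensional subspace is upper
semicontinuous into `Z*` with the weak topology; (iii) the sequential pseudomonotonicity
condition holds. -/
def SetValuedPseudomonotone {Z : Type*} [NormedAddCommGroup Z] [NormedSpace ℝ Z]
    (G : Z → Set (StrongDual ℝ Z)) : Prop :=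
  (∀ z : Z, (G z).Nonempty ∧ IsClosed (G z) ∧ Bornology.IsBounded (G z) ∧ Convex ℝ (G z)) ∧
  (∀ H : Submodule ℝ Z, FiniteDimensional ℝ H →
    ∀ u : H, ∀ O : Set (WeakDual ℝ Z), IsOpen O →
      (∀ f ∈ G (u : Z), StrongDual.toWeakDual f ∈ O) →
      ∃ U : Set H, IsOpen U ∧ u ∈ U ∧
        ∀ v ∈ U, ∀ f ∈ G ((v : H) : Z), StrongDual.toWeakDual f ∈ O) ∧
  (∀ (zn : ℕ → Z) (z : Z) (zs : ℕ → StrongDual ℝ Z),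
    (∀ f : StrongDual ℝ Z, Tendsto (fun n => f (zn n)) atTop (nhds (f z))) →
    (∀ n, zs n ∈ G (zn n)) →
    Filter.limsup (fun n => zs n (zn n - z)) atTop ≤ 0 →
    ∀ x : Z, ∃ zstar ∈ G z,
      zstar (z - x) ≤ Filter.liminf (fun n => zs n (zn n - x)) atTop)

/-!
The Clarke gradient of a locally Lipschitz function is nonempty (Hahn–Banach applied to the
sublinear function `v ↦ F°(x; v)`), convex and locally bounded, and its graph is closed for norm
convergence of the base point and weak* convergence of the gradients, since `F°` is upper
semicontinuous in the base point. By Banach–Alaoglu its values are weak* compact, so their images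
under `ψ*` are closed, and closed graph plus local boundedness give upper semicontinuity into the
weak* topology. For (iii), compactness of `ψ` turns `uₙ ⇀ u` into `ψ uₙ → ψ u` in norm; along a
refinement of the sequence on which `⟨ψ* ηₙ, uₙ - x⟩` tends to its liminf, a weak* cluster point
`η` of the `ηₙ` lies in `∂φ(ψ u)` and `⟨ψ* η, u - x⟩` equals that liminf, because
`⟨ηₙ, ψ uₙ - ψ u⟩ → 0`.
-/

theorem Filter.Eventually.eventually_nhds_prod {X β : Type*} [TopologicalSpace X] {x : X}
    {l : Filter β} {P : X × β → Prop} (h : ∀ᶠ q in 𝓝 x ×ˢ l, P q) :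
    ∀ᶠ y in 𝓝 x, ∀ᶠ q in 𝓝 y ×ˢ l, P q := by
  obtain ⟨s, hs, t, ht, hst⟩ := mem_prod_iff.1 h
  filter_upwards [eventually_mem_nhds_iff.2 hs] with y hy using
    mem_of_superset (prod_mem_prod hy ht) hst

theorem StrongDual.exists_mapClusterPt_toWeakDual {𝕜 E : Type*} [NontriviallyNormedField 𝕜]
    [ProperSpace 𝕜] [SeminormedAddCommGroup E] [NormedSpace 𝕜 E] {ι : Type*} {l : Filter ι}
    [l.NeBot] {η : ι → StrongDual 𝕜 E} {R : ℝ} (h : ∀ᶠ i in l, ‖η i‖ ≤ R) :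
    ∃ η₀ : StrongDual 𝕜 E, MapClusterPt (toWeakDual η₀) l (toWeakDual ∘ η) := by
  obtain ⟨ζ, -, hζ⟩ := (WeakDual.isCompact_closedBall (0 : StrongDual 𝕜 E) R).exists_mapClusterPt
    (le_principal_iff.2 (h.mono fun _ hi => mem_closedBall_zero_iff.2 hi))
  exact ⟨WeakDual.toStrongDual ζ, hζ⟩

section Duality

variable {𝕜 E G : Type*} [RCLike 𝕜] [NormedAddCommGroup E] [NormedSpace 𝕜 E]
  [NormedAddCommGroup G] [NormedSpace 𝕜 G]

theorem isBounded_range_of_forall_dual_tendsto [CompleteSpace E] {zn : ℕ → E} {z : E}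
    (h : ∀ f : StrongDual 𝕜 E, Tendsto (fun n => f (zn n)) atTop (𝓝 (f z))) :
    Bornology.IsBounded (Set.range zn) := by
  obtain ⟨C, hC⟩ := banach_steinhaus (g := fun n => inclusionInDoubleDual 𝕜 E (zn n)) fun f => by
    obtain ⟨C, hC⟩ := (h f).norm.bddAbove_range
    exact ⟨C, fun n => hC (Set.mem_range_self n)⟩
  refine isBounded_iff_forall_norm_le.2 ⟨C, Set.forall_mem_range.2 fun n => ?_⟩
  rw [← (inclusionInDoubleDualLi 𝕜).norm_map]
  exact hC n

theorem IsCompactOperator.tendsto_of_forall_dual_tendsto [CompleteSpace E] {ψ : E →L[𝕜] G}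
    (hψ : IsCompactOperator ψ) {zn : ℕ → E} {z : E}
    (h : ∀ f : StrongDual 𝕜 E, Tendsto (fun n => f (zn n)) atTop (𝓝 (f z))) :
    Tendsto (fun n => ψ (zn n)) atTop (𝓝 (ψ z)) := by
  obtain ⟨K, hK, hψK⟩ := hψ.image_subset_compact_of_isVonNBounded
    ((NormedSpace.isVonNBounded_iff 𝕜).2 (isBounded_range_of_forall_dual_tendsto h))
  refine hK.tendsto_nhds_of_unique_mapClusterPt
    (Eventually.of_forall fun n => hψK ⟨zn n, Set.mem_range_self n, rfl⟩) fun w _ hw => ?_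
  refine (SeparatingDual.eq_iff_forall_dual_eq (R := 𝕜)).2 fun g => ?_
  have hgw : MapClusterPt (g w) atTop (fun n => g (ψ (zn n))) :=
    hw.continuousAt_comp g.continuous.continuousAt
  exact eq_of_nhds_neBot (ClusterPt.mono hgw (h (g.comp ψ))).neBot

theorem continuous_toWeakDual_comp (ψ : E →L[𝕜] G) :
    Continuous fun ζ : WeakDual 𝕜 G => StrongDual.toWeakDual ((WeakDual.toStrongDual ζ).comp ψ) :=
  WeakDual.continuous_of_continuous_eval fun y => WeakDual.eval_continuous (ψ y)

theorem isClosed_image_comp_of_isCompact {A : Set (StrongDual 𝕜 G)}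
    (hA : IsCompact (WeakDual.toStrongDual ⁻¹' A)) (ψ : E →L[𝕜] G) :
    IsClosed ((fun η : StrongDual 𝕜 G => η.comp ψ) '' A) := by
  have himage : (fun η : StrongDual 𝕜 G => η.comp ψ) '' A = StrongDual.toWeakDual ⁻¹'
      ((fun ζ : WeakDual 𝕜 G => StrongDual.toWeakDual ((WeakDual.toStrongDual ζ).comp ψ)) ''
        (WeakDual.toStrongDual ⁻¹' A)) := by
    ext f
    constructor
    · rintro ⟨η, hη, rfl⟩
      exact ⟨StrongDual.toWeakDual η, hη, rfl⟩
    · rintro ⟨ζ, hζ, hf⟩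
      exact ⟨WeakDual.toStrongDual ζ, hζ, congrArg WeakDual.toStrongDual hf⟩
  rw [himage]
  exact ((hA.image (continuous_toWeakDual_comp ψ)).isClosed).preimage
    NormedSpace.Dual.toWeakDual_continuous

end Duality

section ClarkeDeriv

variable {Y : Type*} [NormedAddCommGroup Y] {x : Y}

abbrev clarkeFilter (x : Y) : Filter (Y × ℝ) := 𝓝 x ×ˢ 𝓝[>] 0

theorem tendsto_clarkeFilter_smul {c : ℝ} (hc : 0 < c) :
    Tendsto (fun p : Y × ℝ => (p.1, c * p.2)) (clarkeFilter x) (clarkeFilter x) := by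
  refine tendsto_fst.prodMk (tendsto_nhdsWithin_iff.2 ⟨?_, ?_⟩)
  · simpa using ((tendsto_snd (f := 𝓝 x) (g := 𝓝[>] (0 : ℝ))).mono_right
      nhdsWithin_le_nhds).const_mul c
  · exact (tendsto_snd.eventually self_mem_nhdsWithin).mono fun p hp => mul_pos hc hp

variable [NormedSpace ℝ Y] {F : Y → ℝ}

-- `clarkeDeriv F x v` is by definition `limsup (diffQuot F v) (clarkeFilter x)`.
noncomputable def diffQuot (F : Y → ℝ) (v : Y) (p : Y × ℝ) : ℝ := (F (p.1 + p.2 • v) - F p.1) / p.2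

theorem clarkeDeriv_zero (F : Y → ℝ) (x : Y) : clarkeDeriv F x 0 = 0 := by
  simp [clarkeDeriv]

theorem diffQuot_smul {c : ℝ} (hc : c ≠ 0) (v : Y) (p : Y × ℝ) :
    diffQuot F (c • v) p = c * diffQuot F v (p.1, c * p.2) := by
  rw [diffQuot, diffQuot, smul_smul, mul_comm p.2 c, mul_div_assoc', mul_div_mul_left _ _ hc]

theorem diffQuot_add (v w : Y) (p : Y × ℝ) :
    diffQuot F (v + w) p = diffQuot F v (p.1 + p.2 • w, p.2) + diffQuot F w p := by
  simp only [diffQuot]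
  rw [← add_div, sub_add_sub_cancel, smul_add, add_comm (p.2 • v), add_assoc]

theorem tendsto_clarkeFilter_shift (w : Y) :
    Tendsto (fun p : Y × ℝ => (p.1 + p.2 • w, p.2)) (clarkeFilter x) (clarkeFilter x) := by
  refine Tendsto.prodMk ?_ tendsto_snd
  simpa using (tendsto_fst (f := 𝓝 x)).add
    (((tendsto_snd (g := 𝓝[>] (0 : ℝ))).mono_right nhdsWithin_le_nhds).smul_const w)

theorem LocallyLipschitz.exists_eventually_abs_diffQuot_le (hF : LocallyLipschitz F) (x : Y) :
    ∃ C ≥ 0, ∀ᶠ x' in 𝓝 x, ∀ v, ∀ᶠ p in clarkeFilter x', |diffQuot F v p| ≤ C * ‖v‖ := by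
  obtain ⟨K, t, ht, hK⟩ := hF x
  refine ⟨K, K.2, ?_⟩
  filter_upwards [eventually_mem_nhds_iff.2 ht] with x' hx' v
  have hbase : ∀ᶠ p in clarkeFilter x', p.1 ∈ t := tendsto_fst.eventually hx'
  have hstep : ∀ᶠ p in clarkeFilter x', p.1 + p.2 • v ∈ t :=
    (tendsto_clarkeFilter_shift v).eventually hbase
  have hpos : ∀ᶠ p in clarkeFilter x', 0 < p.2 := tendsto_snd.eventually self_mem_nhdsWithin
  filter_upwards [hbase, hstep, hpos] with p hp₁ hp₂ hp₃
  rw [diffQuot, abs_div, abs_of_pos hp₃, div_le_iff₀ hp₃]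
  calc |F (p.1 + p.2 • v) - F p.1| ≤ K * ‖p.2 • v‖ := by
        simpa [Real.dist_eq, dist_eq_norm] using hK.dist_le_mul _ hp₂ _ hp₁
    _ = K * ‖v‖ * p.2 := by rw [norm_smul, Real.norm_of_nonneg hp₃.le]; ring

theorem LocallyLipschitz.isBoundedUnder_diffQuot (hF : LocallyLipschitz F) (x v : Y) :
    (clarkeFilter x).IsBoundedUnder (· ≤ ·) (diffQuot F v) := by
  obtain ⟨C, -, h⟩ := hF.exists_eventually_abs_diffQuot_le x
  exact isBoundedUnder_of_eventually_le ((h.self_of_nhds v).mono fun _ hp => (abs_le.1 hp).2)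

theorem LocallyLipschitz.isCoboundedUnder_diffQuot (hF : LocallyLipschitz F) (x v : Y) :
    (clarkeFilter x).IsCoboundedUnder (· ≤ ·) (diffQuot F v) := by
  obtain ⟨C, -, h⟩ := hF.exists_eventually_abs_diffQuot_le x
  exact isCoboundedUnder_le_of_eventually_le _
    ((h.self_of_nhds v).mono fun _ hp => (abs_le.1 hp).1)

theorem LocallyLipschitz.eventually_diffQuot_lt (hF : LocallyLipschitz F) {v : Y} {b : ℝ}
    (h : clarkeDeriv F x v < b) : ∀ᶠ p in clarkeFilter x, diffQuot F v p < b :=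
  eventually_lt_of_limsup_lt h (hF.isBoundedUnder_diffQuot x v)

theorem LocallyLipschitz.clarkeDeriv_le_of_eventually_le (hF : LocallyLipschitz F) {v : Y}
    {b : ℝ} (h : ∀ᶠ p in clarkeFilter x, diffQuot F v p ≤ b) : clarkeDeriv F x v ≤ b :=
  limsup_le_of_le (hF.isCoboundedUnder_diffQuot x v) h

theorem LocallyLipschitz.exists_eventually_clarkeDeriv_le (hF : LocallyLipschitz F) (x : Y) :
    ∃ C ≥ 0, ∀ᶠ x' in 𝓝 x, ∀ v, clarkeDeriv F x' v ≤ C * ‖v‖ := by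
  obtain ⟨C, hC, h⟩ := hF.exists_eventually_abs_diffQuot_le x
  exact ⟨C, hC, h.mono fun _ hx' v =>
    hF.clarkeDeriv_le_of_eventually_le ((hx' v).mono fun _ hp => (abs_le.1 hp).2)⟩

theorem LocallyLipschitz.clarkeDeriv_smul_le (hF : LocallyLipschitz F) (x v : Y) {c : ℝ}
    (hc : 0 < c) : clarkeDeriv F x (c • v) ≤ c * clarkeDeriv F x v := by
  refine le_of_forall_gt_imp_ge_of_dense fun b hb => hF.clarkeDeriv_le_of_eventually_le ?_
  have hv : clarkeDeriv F x v < b / c := by rwa [lt_div_iff₀' hc]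
  filter_upwards [(tendsto_clarkeFilter_smul hc).eventually (hF.eventually_diffQuot_lt hv)]
    with p hp
  rw [diffQuot_smul hc.ne']
  exact ((lt_div_iff₀' hc).1 hp).le

theorem LocallyLipschitz.clarkeDeriv_smul (hF : LocallyLipschitz F) (x v : Y) {c : ℝ}
    (hc : 0 < c) : clarkeDeriv F x (c • v) = c * clarkeDeriv F x v := by
  refine (hF.clarkeDeriv_smul_le x v hc).antisymm ?_
  have h := hF.clarkeDeriv_smul_le x (c • v) (inv_pos.2 hc)
  rwa [inv_smul_smul₀ hc.ne', le_inv_mul_iff₀ hc] at h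

theorem LocallyLipschitz.clarkeDeriv_add_le (hF : LocallyLipschitz F) (x v w : Y) :
    clarkeDeriv F x (v + w) ≤ clarkeDeriv F x v + clarkeDeriv F x w := by
  refine le_of_forall_pos_le_add fun ε hε => hF.clarkeDeriv_le_of_eventually_le ?_
  have hv := hF.eventually_diffQuot_lt (lt_add_of_pos_right (clarkeDeriv F x v) (half_pos hε))
  have hw := hF.eventually_diffQuot_lt (lt_add_of_pos_right (clarkeDeriv F x w) (half_pos hε))
  filter_upwards [(tendsto_clarkeFilter_shift w).eventually hv, hw] with p hpv hpw
  rw [diffQuot_add]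
  linarith

theorem LocallyLipschitz.eventually_clarkeDeriv_le (hF : LocallyLipschitz F) {v : Y} {b : ℝ}
    (h : clarkeDeriv F x v < b) : ∀ᶠ x' in 𝓝 x, clarkeDeriv F x' v ≤ b :=
  (hF.eventually_diffQuot_lt h).eventually_nhds_prod.mono fun _ hx' =>
    hF.clarkeDeriv_le_of_eventually_le (hx'.mono fun _ => le_of_lt)

end ClarkeDeriv

section ClarkeGrad

variable {Y : Type*} [NormedAddCommGroup Y] [NormedSpace ℝ Y] {F : Y → ℝ} {x : Y}

theorem LinearMap.norm_le_of_forall_le_mul_norm {g : Y →ₗ[ℝ] ℝ} {C : ℝ}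
    (h : ∀ v, g v ≤ C * ‖v‖) (v : Y) : ‖g v‖ ≤ C * ‖v‖ := by
  have hneg := h (-v)
  rw [map_neg, norm_neg] at hneg
  exact abs_le.2 ⟨by linarith, h v⟩

theorem LocallyLipschitz.clarkeGrad_nonempty (hF : LocallyLipschitz F) (x : Y) :
    (clarkeGrad F x).Nonempty := by
  obtain ⟨C, -, hC⟩ := hF.exists_eventually_clarkeDeriv_le x
  obtain ⟨g, -, hg⟩ := exists_extension_of_le_sublinear ⟨⊥, 0⟩ (clarkeDeriv F x)
    (fun _ hc v => hF.clarkeDeriv_smul x v hc) (hF.clarkeDeriv_add_le x)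
    (fun y => by simp [(Submodule.mem_bot ℝ).1 y.2, clarkeDeriv_zero])
  exact ⟨g.mkContinuous C (LinearMap.norm_le_of_forall_le_mul_norm fun v =>
    (hg v).trans (hC.self_of_nhds v)), hg⟩

theorem LocallyLipschitz.exists_eventually_norm_le_of_mem_clarkeGrad (hF : LocallyLipschitz F)
    (x : Y) : ∃ C, ∀ᶠ x' in 𝓝 x, ∀ η ∈ clarkeGrad F x', ‖η‖ ≤ C := by
  obtain ⟨C, hC, h⟩ := hF.exists_eventually_clarkeDeriv_le x
  exact ⟨C, h.mono fun _ hx' η hη => η.opNorm_le_bound hC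
    (LinearMap.norm_le_of_forall_le_mul_norm (g := η.toLinearMap) fun v => (hη v).trans (hx' v))⟩

theorem clarkeGrad_eq_iInter (F : Y → ℝ) (x : Y) :
    clarkeGrad F x = ⋂ v, {η : StrongDual ℝ Y | η v ≤ clarkeDeriv F x v} := by
  ext; simp [clarkeGrad]

theorem convex_clarkeGrad (F : Y → ℝ) (x : Y) : Convex ℝ (clarkeGrad F x) := by
  rw [clarkeGrad_eq_iInter]
  exact convex_iInter fun v => convex_halfSpace_le
    ⟨fun _ _ => rfl, fun _ _ => rfl⟩ _

theorem isClosed_toStrongDual_preimage_clarkeGrad (F : Y → ℝ) (x : Y) :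
    IsClosed (WeakDual.toStrongDual ⁻¹' clarkeGrad F x) := by
  rw [clarkeGrad_eq_iInter, Set.preimage_iInter]
  exact isClosed_iInter fun v => isClosed_le (WeakDual.eval_continuous v) continuous_const

theorem LocallyLipschitz.isBounded_clarkeGrad (hF : LocallyLipschitz F) (x : Y) :
    Bornology.IsBounded (clarkeGrad F x) := by
  obtain ⟨C, hC⟩ := hF.exists_eventually_norm_le_of_mem_clarkeGrad x
  exact (Metric.isBounded_closedBall (x := 0) (r := C)).subset
    fun η hη => mem_closedBall_zero_iff.2 (hC.self_of_nhds η hη)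

theorem LocallyLipschitz.isCompact_toStrongDual_preimage_clarkeGrad (hF : LocallyLipschitz F)
    (x : Y) : IsCompact (WeakDual.toStrongDual ⁻¹' clarkeGrad F x) :=
  WeakDual.isCompact_of_bounded_of_closed
    (WeakDual.isBounded_toStrongDual_preimage_iff_isBounded.2 (hF.isBounded_clarkeGrad x))
    (isClosed_toStrongDual_preimage_clarkeGrad F x)

theorem LocallyLipschitz.mem_clarkeGrad_of_mapClusterPt (hF : LocallyLipschitz F) {ι : Type*}
    {l : Filter ι} {xi : ι → Y} (hx : Tendsto xi l (𝓝 x)) {η : ι → StrongDual ℝ Y}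
    (hη : ∀ᶠ i in l, η i ∈ clarkeGrad F (xi i)) {η₀ : StrongDual ℝ Y}
    (hη₀ : MapClusterPt (StrongDual.toWeakDual η₀) l (StrongDual.toWeakDual ∘ η)) :
    η₀ ∈ clarkeGrad F x := by
  intro v
  refine le_of_forall_gt_imp_ge_of_dense fun b hb => ?_
  have hle : ∀ᶠ i in l, η i v ≤ b :=
    (hη.and (hx.eventually (hF.eventually_clarkeDeriv_le hb))).mono fun i hi =>
      (hi.1 v).trans hi.2
  exact isClosed_Iic.mem_of_mapClusterPt
    (hη₀.continuousAt_comp (WeakDual.eval_continuous v).continuousAt) hle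

theorem LocallyLipschitz.eventually_mapsTo_clarkeGrad (hF : LocallyLipschitz F)
    {O : Set (WeakDual ℝ Y)} (hO : IsOpen O)
    (hxO : Set.MapsTo StrongDual.toWeakDual (clarkeGrad F x) O) :
    ∀ᶠ x' in 𝓝 x, Set.MapsTo StrongDual.toWeakDual (clarkeGrad F x') O := by
  by_contra h
  set S := {x' | ∃ η ∈ clarkeGrad F x', StrongDual.toWeakDual η ∉ O}
  have hS : ∃ᶠ x' in 𝓝 x, x' ∈ S :=
    (not_eventually.1 h).mono fun _ hx' => by simpa [S, Set.MapsTo] using hx'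
  have : (comap ((↑) : S → Y) (𝓝 x)).NeBot :=
    mem_closure_iff_comap_neBot.1 (mem_closure_iff_frequently.2 hS)
  choose η hη hηO using fun y : S => y.2
  have hval : Tendsto ((↑) : S → Y) (comap (↑) (𝓝 x)) (𝓝 x) := tendsto_comap
  obtain ⟨C, hC⟩ := hF.exists_eventually_norm_le_of_mem_clarkeGrad x
  obtain ⟨η₀, hη₀⟩ := StrongDual.exists_mapClusterPt_toWeakDual
    ((hval.eventually hC).mono fun y hy => hy _ (hη y))
  have hmem := hF.mem_clarkeGrad_of_mapClusterPt hval (Eventually.of_forall hη) hη₀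
  obtain ⟨y, hy⟩ := (hη₀.frequently (hO.mem_nhds (hxO hmem))).exists
  exact hηO y hy

theorem LocallyLipschitz.exists_mem_clarkeGrad_apply_le_liminf (hF : LocallyLipschitz F)
    {xn yn : ℕ → Y} {y : Y} (hx : Tendsto xn atTop (𝓝 x)) (hy : Tendsto yn atTop (𝓝 y))
    {η : ℕ → StrongDual ℝ Y} (hη : ∀ n, η n ∈ clarkeGrad F (xn n)) :
    ∃ η₀ ∈ clarkeGrad F x, η₀ y ≤ liminf (fun n => η n (yn n)) atTop := by
  obtain ⟨C, hC⟩ := hF.exists_eventually_norm_le_of_mem_clarkeGrad x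
  have hηC : ∀ᶠ n in atTop, ‖η n‖ ≤ C := (hx.eventually hC).mono fun n hn => hn _ (hη n)
  set a := fun n => η n (yn n)
  have hgap : Tendsto (fun n => η n (yn n - y)) atTop (𝓝 0) := by
    refine squeeze_zero_norm' (hηC.mono fun n hn => ((η n).le_opNorm _).trans
      (mul_le_mul_of_nonneg_right hn (norm_nonneg _))) ?_
    simpa using (tendsto_iff_norm_sub_tendsto_zero.1 hy).const_mul C
  have ha_bdd : ∀ᶠ n in atTop, |a n| ≤ C * (‖y‖ + 1) := by
    filter_upwards [hηC, hy.norm.eventually_le_const (lt_add_one ‖y‖)] with n hn hyn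
    exact ((η n).le_opNorm _).trans (mul_le_mul hn hyn (norm_nonneg _) ((norm_nonneg _).trans hn))
  set L := liminf a atTop
  have hL : MapClusterPt L atTop a := (isLeast_mapClusterPt_liminf
    (isBoundedUnder_of_eventually_le (ha_bdd.mono fun _ h => (abs_le.1 h).2)).isCoboundedUnder_ge
    (isBoundedUnder_of_eventually_ge (ha_bdd.mono fun _ h => (abs_le.1 h).1))).1
  set l := comap a (𝓝 L) ⊓ atTop
  have : l.NeBot := by
    have h := hL.neBot
    rw [← Filter.push_pull'] at h
    exact h.of_map
  obtain ⟨η₀, hη₀⟩ := StrongDual.exists_mapClusterPt_toWeakDual (l := l)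
    (hηC.filter_mono inf_le_right)
  have ha : Tendsto a l (𝓝 L) := tendsto_comap.mono_left inf_le_left
  have hy' : Tendsto (fun n => η n y) l (𝓝 L) := by
    simpa [a, map_sub] using ha.sub (hgap.mono_left inf_le_right)
  have hcl : MapClusterPt (η₀ y) l (fun n => η n y) :=
    hη₀.continuousAt_comp (WeakDual.eval_continuous y).continuousAt
  have hL' : η₀ y = L := eq_of_nhds_neBot (ClusterPt.mono hcl hy').neBot
  exact ⟨η₀, hF.mem_clarkeGrad_of_mapClusterPt (hx.mono_left inf_le_right)
    (Eventually.of_forall hη) hη₀, hL'.le⟩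

end ClarkeGrad

theorem statement_3_general
    {U₁ U₂ : Type*} [NormedAddCommGroup U₁] [NormedSpace ℝ U₁] [CompleteSpace U₁]
    [NormedAddCommGroup U₂] [NormedSpace ℝ U₂]
    (ψ : U₁ →L[ℝ] U₂) (hψc : IsCompactOperator (⇑ψ))
    (φ : U₂ → ℝ) (hφ : LocallyLipschitz φ) :
    SetValuedPseudomonotone
      (fun u : U₁ => (fun η : StrongDual ℝ U₂ => η.comp ψ) '' clarkeGrad φ (ψ u)) := by
  let L : StrongDual ℝ U₂ →L[ℝ] StrongDual ℝ U₁ := ContinuousLinearMap.precomp ℝ ψ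
  refine ⟨fun u => ⟨(hφ.clarkeGrad_nonempty _).image _,
    isClosed_image_comp_of_isCompact (hφ.isCompact_toStrongDual_preimage_clarkeGrad _) ψ,
    L.lipschitz.isBounded_image (hφ.isBounded_clarkeGrad _),
    (convex_clarkeGrad φ _).linear_image L.toLinearMap⟩, ?_, ?_⟩
  · intro H _ u O hO hu
    have hev := hφ.eventually_mapsTo_clarkeGrad (hO.preimage (continuous_toWeakDual_comp ψ))
      fun η hη => hu _ ⟨η, hη, rfl⟩
    obtain ⟨U, hU, hUo, huU⟩ := eventually_nhds_iff.1
      (((ψ.continuous.comp continuous_subtype_val).tendsto u).eventually hev)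
    exact ⟨U, hUo, huU, fun v hv _ ⟨η, hη, hf⟩ => hf ▸ hU v hv hη⟩
  · intro zn z zs hweak hzs _ x
    choose η hη hηzs using hzs
    have hψz := hψc.tendsto_of_forall_dual_tendsto hweak
    obtain ⟨η₀, hη₀, hle⟩ := hφ.exists_mem_clarkeGrad_apply_le_liminf hψz
      (hψz.sub_const (ψ x)) hη
    refine ⟨η₀.comp ψ, ⟨η₀, hη₀, rfl⟩, ?_⟩
    simpa [← hηzs, map_sub] using hle

/-- If `ψ : U₁ → U₂` is a linear continuous compact operator between
reflexive Banach spaces and `φ : U₂ → ℝ` is locally Lipschitz with `‖∂φ(u)‖ ≤ c_φ(1 + ‖u‖)`,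
then `W(u) = ψ* ∂φ(ψ u)` is pseudomonotone. -/
theorem statement_3
    {U₁ U₂ : Type*} [NormedAddCommGroup U₁] [NormedSpace ℝ U₁] [CompleteSpace U₁]
    [NormedAddCommGroup U₂] [NormedSpace ℝ U₂] [CompleteSpace U₂]
    (hrefl₁ : Function.Surjective ⇑(NormedSpace.inclusionInDoubleDual ℝ U₁))
    (hrefl₂ : Function.Surjective ⇑(NormedSpace.inclusionInDoubleDual ℝ U₂))
    (ψ : U₁ →L[ℝ] U₂) (hψc : IsCompactOperator (⇑ψ))
    (φ : U₂ → ℝ) (hφ : LocallyLipschitz φ)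
    (cφ : ℝ) (hcφ : 0 < cφ)
    (hgrad : ∀ u : U₂, ∀ η ∈ clarkeGrad φ u, ‖η‖ ≤ cφ * (1 + ‖u‖)) :
    SetValuedPseudomonotone
      (fun u : U₁ => (fun η : StrongDual ℝ U₂ => η.comp ψ) '' clarkeGrad φ (ψ u)) :=
  statement_3_general ψ hψc φ hφ
end

section
/- Let Z₂ and Y be real Banach spaces, A₀ : Z₂ → Z₂* a strongly monotone operator with constant m_A > 0, N : Z₂ → Y a continuous linear operator with adjoint N* (N*η = η ∘ N), and J₀ : Y → ℝ a locally Lipschitz functional such that there exists c_J > 0 with ⟨θ₁ − θ₂, w₁ − w₂⟩ ≥ −c_J ‖w₁ − w₂‖_Y² for all θᵢ ∈ ∂J₀(wᵢ), wᵢ ∈ Y (i = 1,2). Assume m_A > c_J ‖N‖². If y₁, y₂ ∈ Z₂ and g₁, g₂ ∈ Z₂* satisfy gᵢ − A₀ yᵢ ∈ N* ∂J₀(N yᵢ) for i = 1, 2, then ‖y₁ − y₂‖_{Z₂} ≤ ‖g₁ − g₂‖_{Z₂*} / (m_A − c_J ‖N‖²). In particular, for each g ∈ Z₂* the inclusion A₀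 y + N* ∂J₀(N y) ∋ g has at most one solution y ∈ Z₂. -/
open Filter Topology NormedSpace

/-!
Test the difference of the two inclusions against `y₁ - y₂`. Strong monotonicity of `A₀`
contributes at least `m_A ‖y₁ - y₂‖²`, while the relaxed monotonicity of `∂J₀`, pulled back
along `N`, costs at most `c_J ‖N (y₁ - y₂)‖² ≤ c_J ‖N‖² ‖y₁ - y₂‖²`. Hence
`(m_A - c_J ‖N‖²) ‖y₁ - y₂‖² ≤ ⟨g₁ - g₂, y₁ - y₂⟩ ≤ ‖g₁ - g₂‖ ‖y₁ - y₂‖`.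
-/

theorem norm_le_opNorm_div_of_mul_sq_le_apply {E : Type*} [SeminormedAddCommGroup E]
    [NormedSpace ℝ E] {f : StrongDual ℝ E} {u : E} {k : ℝ} (hk : 0 < k)
    (h : k * ‖u‖ ^ 2 ≤ f u) : ‖u‖ ≤ ‖f‖ / k := by
  rw [le_div_iff₀ hk]
  have hf : f u ≤ ‖f‖ * ‖u‖ := (le_abs_self _).trans (f.le_opNorm u)
  rcases (norm_nonneg u).eq_or_lt with hu | hu
  · rw [← hu, zero_mul]
    exact norm_nonneg f
  · refine le_of_mul_le_mul_right ?_ hu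
    linarith

section InclusionEstimate

variable {Z Y : Type*} [SeminormedAddCommGroup Z] [NormedSpace ℝ Z]
  [SeminormedAddCommGroup Y] [NormedSpace ℝ Y]

theorem eq_add_comp_of_sub_mem_image_comp {g a : StrongDual ℝ Z} {N : Z →L[ℝ] Y}
    {S : Set (StrongDual ℝ Y)} (h : g - a ∈ (fun η : StrongDual ℝ Y => η.comp N) '' S) :
    ∃ θ ∈ S, g = a + θ.comp N := by
  obtain ⟨θ, hθ, hθg⟩ := h
  exact ⟨θ, hθ, sub_eq_iff_eq_add'.1 hθg.symm⟩

theorem mul_norm_sub_sq_le_apply_sub_of_sub_mem_image_comp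
    {A₀ : Z → StrongDual ℝ Z} {m : ℝ}
    (hA : ∀ y₁ y₂ : Z, m * ‖y₁ - y₂‖ ^ 2 ≤ (A₀ y₁ - A₀ y₂) (y₁ - y₂))
    {N : Z →L[ℝ] Y} {S : Y → Set (StrongDual ℝ Y)} {c : ℝ} (hc : 0 ≤ c)
    (hS : ∀ w₁ w₂ : Y, ∀ θ₁ ∈ S w₁, ∀ θ₂ ∈ S w₂,
      -(c * ‖w₁ - w₂‖ ^ 2) ≤ (θ₁ - θ₂) (w₁ - w₂))
    {y₁ y₂ : Z} {g₁ g₂ : StrongDual ℝ Z}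
    (h₁ : g₁ - A₀ y₁ ∈ (fun η : StrongDual ℝ Y => η.comp N) '' S (N y₁))
    (h₂ : g₂ - A₀ y₂ ∈ (fun η : StrongDual ℝ Y => η.comp N) '' S (N y₂)) :
    (m - c * ‖N‖ ^ 2) * ‖y₁ - y₂‖ ^ 2 ≤ (g₁ - g₂) (y₁ - y₂) := by
  obtain ⟨θ₁, hθ₁, rfl⟩ := eq_add_comp_of_sub_mem_image_comp h₁
  obtain ⟨θ₂, hθ₂, rfl⟩ := eq_add_comp_of_sub_mem_image_comp h₂
  have hθ : -(c * ‖N (y₁ - y₂)‖ ^ 2) ≤ (θ₁ - θ₂) (N (y₁ - y₂)) := by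
    simpa only [map_sub] using hS _ _ θ₁ hθ₁ θ₂ hθ₂
  have hN : ‖N (y₁ - y₂)‖ ^ 2 ≤ ‖N‖ ^ 2 * ‖y₁ - y₂‖ ^ 2 := by
    rw [← mul_pow]
    exact pow_le_pow_left₀ (norm_nonneg _) (N.le_opNorm _) 2
  have hsplit : (A₀ y₁ + θ₁.comp N - (A₀ y₂ + θ₂.comp N)) (y₁ - y₂)
      = (A₀ y₁ - A₀ y₂) (y₁ - y₂) + (θ₁ - θ₂) (N (y₁ - y₂)) := by
    simp only [sub_apply, add_apply, ContinuousLinearMap.comp_apply]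
    ring
  rw [hsplit]
  linarith [hA y₁ y₂, mul_le_mul_of_nonneg_left hN hc]

end InclusionEstimate

theorem statement_6_general
    {Z₂ Y : Type*} [NormedAddCommGroup Z₂] [NormedSpace ℝ Z₂]
    [NormedAddCommGroup Y] [NormedSpace ℝ Y]
    (A₀ : Z₂ → StrongDual ℝ Z₂) (mA : ℝ)
    (hAsm : ∀ y₁ y₂ : Z₂, mA * ‖y₁ - y₂‖ ^ 2 ≤ (A₀ y₁ - A₀ y₂) (y₁ - y₂))
    (N : Z₂ →L[ℝ] Y)
    (J₀ : Y → ℝ)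
    (cJ : ℝ) (hcJ : 0 < cJ)
    (hJrel : ∀ w₁ w₂ : Y, ∀ θ₁ ∈ clarkeGrad J₀ w₁, ∀ θ₂ ∈ clarkeGrad J₀ w₂,
      -(cJ * ‖w₁ - w₂‖ ^ 2) ≤ (θ₁ - θ₂) (w₁ - w₂))
    (hO : cJ * ‖N‖ ^ 2 < mA) :
    (∀ (y₁ y₂ : Z₂) (g₁ g₂ : StrongDual ℝ Z₂),
      g₁ - A₀ y₁ ∈ (fun η : StrongDual ℝ Y => η.comp N) '' clarkeGrad J₀ (N y₁) →
      g₂ - A₀ y₂ ∈ (fun η : StrongDual ℝ Y => η.comp N) '' clarkeGrad J₀ (N y₂) →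
      ‖y₁ - y₂‖ ≤ ‖g₁ - g₂‖ / (mA - cJ * ‖N‖ ^ 2)) ∧
    (∀ (g : StrongDual ℝ Z₂) (y₁ y₂ : Z₂),
      g - A₀ y₁ ∈ (fun η : StrongDual ℝ Y => η.comp N) '' clarkeGrad J₀ (N y₁) →
      g - A₀ y₂ ∈ (fun η : StrongDual ℝ Y => η.comp N) '' clarkeGrad J₀ (N y₂) →
      y₁ = y₂) := by
  have hk : 0 < mA - cJ * ‖N‖ ^ 2 := sub_pos.2 hO
  refine ⟨fun y₁ y₂ g₁ g₂ h₁ h₂ => norm_le_opNorm_div_of_mul_sq_le_apply hk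
      (mul_norm_sub_sq_le_apply_sub_of_sub_mem_image_comp hAsm hcJ.le hJrel h₁ h₂),
    fun g y₁ y₂ h₁ h₂ => ?_⟩
  have h := norm_le_opNorm_div_of_mul_sq_le_apply hk
    (mul_norm_sub_sq_le_apply_sub_of_sub_mem_image_comp hAsm hcJ.le hJrel h₁ h₂)
  rw [sub_self, norm_zero, zero_div] at h
  exact sub_eq_zero.1 (norm_le_zero_iff.1 h)

/-- Stability and uniqueness for the inclusion
`A₀ y + N* ∂J₀(N y) ∋ g`: if `A₀` is strongly monotone with constant `m_A`, `J₀` is locally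
Lipschitz with relaxed monotone gradient (constant `c_J`) and `m_A > c_J ‖N‖²`, then any two
solutions corresponding to right-hand sides `g₁, g₂` satisfy
`‖y₁ - y₂‖ ≤ ‖g₁ - g₂‖ / (m_A - c_J ‖N‖²)`; in particular solutions are unique. -/
theorem statement_6
    {Z₂ Y : Type*} [NormedAddCommGroup Z₂] [NormedSpace ℝ Z₂]
    [NormedAddCommGroup Y] [NormedSpace ℝ Y]
    (A₀ : Z₂ → StrongDual ℝ Z₂) (mA : ℝ) (hmA : 0 < mA)
    (hAsm : ∀ y₁ y₂ : Z₂, mA * ‖y₁ - y₂‖ ^ 2 ≤ (A₀ y₁ - A₀ y₂) (y₁ - y₂))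
    (N : Z₂ →L[ℝ] Y)
    (J₀ : Y → ℝ) (hJ₀ : LocallyLipschitz J₀)
    (cJ : ℝ) (hcJ : 0 < cJ)
    (hJrel : ∀ w₁ w₂ : Y, ∀ θ₁ ∈ clarkeGrad J₀ w₁, ∀ θ₂ ∈ clarkeGrad J₀ w₂,
      -(cJ * ‖w₁ - w₂‖ ^ 2) ≤ (θ₁ - θ₂) (w₁ - w₂))
    (hO : cJ * ‖N‖ ^ 2 < mA) :
    (∀ (y₁ y₂ : Z₂) (g₁ g₂ : StrongDual ℝ Z₂),
      g₁ - A₀ y₁ ∈ (fun η : StrongDual ℝ Y => η.comp N) '' clarkeGrad J₀ (N y₁) →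
      g₂ - A₀ y₂ ∈ (fun η : StrongDual ℝ Y => η.comp N) '' clarkeGrad J₀ (N y₂) →
      ‖y₁ - y₂‖ ≤ ‖g₁ - g₂‖ / (mA - cJ * ‖N‖ ^ 2)) ∧
    (∀ (g : StrongDual ℝ Z₂) (y₁ y₂ : Z₂),
      g - A₀ y₁ ∈ (fun η : StrongDual ℝ Y => η.comp N) '' clarkeGrad J₀ (N y₁) →
      g - A₀ y₂ ∈ (fun η : StrongDual ℝ Y => η.comp N) '' clarkeGrad J₀ (N y₂) →
      y₁ = y₂) :=
  statement_6_general A₀ mA hAsm N J₀ cJ hcJ hJrel hO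
end
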